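/- arXiv:2511.15527 — 7 statements merged into one kernel-verified Lean document; each statement's English description precedes it below -/
import Mathlib

section
/- Let N ≥ 1 and −1 < δ < 1, with t⁺ = (1+δ)/2 and t⁻ = (1−δ)/2. The (2N+1)×(2N+1) symmetric tridiagonal matrix H with zero diagonal and off-diagonal entries alternating t⁺, t⁻, t⁺, t⁻, … (so H_{2x−1,2x} = t⁺ and H_{2x,2x+1} = t⁻ in 1-based indexing for x = 1,…,N) has eigenvalues 0 and ±√(((1−δ²)/2) cos(kπ/(N+1)) + (1+δ²)/2) for k = 1, …, N, and these are all 2N+1 of its eigenvalues. -/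
/-!
The chain is bipartite, so a vector is a pair of sequences `a` (even sites) and `b` (odd sites),
and it is convenient to extend both to all of `ℤ`: the boundary rows of `H` are then the bulk
recurrence together with `b (-1) = 0 = b N`. The standing waves
`a m = t⁻ sin (mθ) + t⁺ sin ((m+1)θ)`, `b m = μ sin ((m+1)θ)` solve the bulk recurrence as soon as
`μ² = t⁺² + t⁻² + 2 t⁺ t⁻ cos θ`, and the boundary condition becomes `sin ((N+1)θ) = 0`, i.e.
`θ = kπ/(N+1)`. Together with the zero-energy edge state this gives `2N+1` eigenvalues, which are
pairwise distinct because `cos` is injective on `[0, π]`; since eigenvectors for distinct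
eigenvalues are linearly independent, there is no room for any other eigenvalue.
-/

open Real Matrix

theorem Matrix.ncard_le_card_of_forall_exists_eigenvector {ι K : Type*} [Fintype ι] [Field K]
    (A : Matrix ι ι K) (T : Set K)
    (hT : ∀ μ ∈ T, ∃ v, v ≠ 0 ∧ A *ᵥ v = μ • v) : T.ncard ≤ Fintype.card ι := by
  choose v hv0 hv using hT
  have hli : LinearIndependent K fun μ : T => v μ μ.2 :=
    Module.End.eigenvectors_linearIndependent A.mulVecLin T _ fun μ =>
      Module.End.hasEigenvector_iff.mpr
        ⟨Module.End.mem_eigenspace_iff.mpr (hv μ μ.2), hv0 μ μ.2⟩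
  have : Finite T := hli.finite
  have := Fintype.ofFinite T
  have hcard := hli.fintype_card_le_finrank
  rwa [Module.finrank_fintype_fun_eq_card, ← Nat.card_eq_fintype_card,
    Nat.card_coe_set_eq] at hcard

theorem Matrix.exists_eigenvector_iff_mem_of_ncard_eq {ι K : Type*} [Fintype ι] [Field K]
    (A : Matrix ι ι K) {S : Set K} (hS : S.ncard = Fintype.card ι)
    (hS_eig : ∀ μ ∈ S, ∃ v, v ≠ 0 ∧ A *ᵥ v = μ • v) (μ : K) :
    (∃ v, v ≠ 0 ∧ A *ᵥ v = μ • v) ↔ μ ∈ S := by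
  refine ⟨fun hμ => ?_, hS_eig μ⟩
  by_contra hμS
  have hι : 0 < Fintype.card ι := by
    obtain ⟨v, hv0, -⟩ := hμ
    obtain ⟨i, -⟩ := Function.ne_iff.mp hv0
    exact Fintype.card_pos_iff.mpr ⟨i⟩
  have hSfin : S.Finite := Set.finite_of_ncard_pos (hS ▸ hι)
  have hle := A.ncard_le_card_of_forall_exists_eigenvector (insert μ S) <| by
    rintro ν (rfl | hν)
    exacts [hμ, hS_eig ν hν]
  rw [Set.ncard_insert_of_notMem hμS hSfin] at hle
  omega

theorem ncard_zero_union_pm_Icc {G : Type*} [AddCommGroup G] [LinearOrder G]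
    [IsOrderedAddMonoid G] {N : ℕ} {f : ℕ → G} (hf : Set.InjOn f (Set.Icc 1 N))
    (hpos : ∀ k ∈ Set.Icc 1 N, 0 < f k) :
    ({0} ∪ {μ | ∃ k, 1 ≤ k ∧ k ≤ N ∧ (μ = f k ∨ μ = -f k)} : Set G).ncard = 2 * N + 1 := by
  have hset : ({0} ∪ {μ | ∃ k, 1 ≤ k ∧ k ≤ N ∧ (μ = f k ∨ μ = -f k)} : Set G) =
      insert 0 (f '' Set.Icc 1 N ∪ (-f) '' Set.Icc 1 N) := by
    ext μ
    simp only [Set.singleton_union, Set.mem_insert_iff, Set.mem_ofPred_eq, Set.mem_union,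
      Set.mem_image, Set.mem_Icc, Pi.neg_apply]
    grind
  have hzero : (0 : G) ∉ f '' Set.Icc 1 N ∪ (-f) '' Set.Icc 1 N := by
    rintro (⟨k, hk, hfk⟩ | ⟨k, hk, hfk⟩) <;> have := hpos k hk <;> simp_all
  have hdisj : Disjoint (f '' Set.Icc 1 N) ((-f) '' Set.Icc 1 N) := by
    rw [Set.disjoint_left]
    rintro _ ⟨k, hk, rfl⟩ ⟨l, hl, hlk⟩
    have hfk_neg : f k < 0 := hlk ▸ neg_neg_of_pos (hpos l hl)
    exact hfk_neg.not_gt (hpos k hk)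
  rw [hset, Set.ncard_insert_of_notMem hzero, Set.ncard_union_eq hdisj, hf.ncard_image,
    (show Set.InjOn (-f) _ from neg_injective.comp_injOn hf).ncard_image, Set.ncard_Icc_nat]
  omega

def symmTridiagonal {R : Type*} [Zero R] (n : ℕ) (t : ℤ → R) : Matrix (Fin n) (Fin n) R :=
  of fun i j => if (i : ℕ) + 1 = j then t (i : ℕ) else if (j : ℕ) + 1 = i then t (j : ℕ) else 0

theorem symmTridiagonal_mulVec_apply {R : Type*} [Semiring R] {n : ℕ} (t w : ℤ → R)
    (hw_left : w (-1) = 0) (hw_right : w n = 0) (i : Fin n) :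
    (symmTridiagonal n t *ᵥ fun j => w (j : ℕ)) i =
      t i * w (i + 1) + t (i - 1) * w (i - 1) := by
  set f : ℕ → R := fun j => (if (i : ℕ) + 1 = j then t i * w (i + 1) else 0) +
    (if j + 1 = (i : ℕ) then t (i - 1) * w (i - 1) else 0) with hf
  have hterm : ∀ j : Fin n, symmTridiagonal n t i j * w (j : ℕ) = f j := by
    intro j
    simp only [symmTridiagonal, of_apply, hf]
    split_ifs with h1 h2 h2
    · omega
    · simp [← h1]
    · rw [show ((i : ℕ) : ℤ) - 1 = (j : ℕ) by omega]
      simp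
    · simp
  rw [mulVec, dotProduct, Finset.sum_congr rfl fun j _ => hterm j,
    Fin.sum_univ_eq_sum_range f n, hf, Finset.sum_add_distrib, Finset.sum_ite_eq]
  congr 1
  · by_cases h : (i : ℕ) + 1 < n
    · simp [h]
    · simp [h, show ((i : ℕ) : ℤ) + 1 = n by omega, hw_right]
  · obtain ⟨_ | m, hm⟩ := i
    · simp [hw_left]
    · simp [Finset.sum_ite_eq', show m < n by omega]

def sshHopping {R : Type*} (tp tm : R) (i : ℤ) : R := if Even i then tp else tm

def interleave {R : Type*} (a b : ℤ → R) (i : ℤ) : R := if Even i then a (i / 2) else b (i / 2)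

section
variable {R : Type*} (tp tm : R) (a b : ℤ → R) (m : ℤ)

@[simp] theorem sshHopping_two_mul : sshHopping tp tm (2 * m) = tp := by
  simp [sshHopping]

@[simp] theorem sshHopping_two_mul_add_one : sshHopping tp tm (2 * m + 1) = tm := by
  simp [sshHopping]

@[simp] theorem interleave_two_mul : interleave a b (2 * m) = a m := by
  simp [interleave]

@[simp] theorem interleave_two_mul_add_one : interleave a b (2 * m + 1) = b m := by
  simp [interleave, show (2 * m + 1) / 2 = m by omega]

end

theorem sshHopping_interleave_recurrence {R : Type*} [Semiring R] {tp tm μ : R} {a b : ℤ → R}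
    (heven : ∀ m, tp * b m + tm * b (m - 1) = μ * a m)
    (hodd : ∀ m, tm * a (m + 1) + tp * a m = μ * b m) (i : ℤ) :
    sshHopping tp tm i * interleave a b (i + 1) +
      sshHopping tp tm (i - 1) * interleave a b (i - 1) = μ * interleave a b i := by
  obtain ⟨m, rfl | rfl⟩ := Int.even_or_odd' i
  · rw [show 2 * m - 1 = 2 * (m - 1) + 1 by ring]
    simpa using heven m
  · rw [show 2 * m + 1 + 1 = 2 * (m + 1) by ring, add_sub_cancel_right]
    simpa using hodd m

section
variable {R : Type*} {N : ℕ} {tp tm μ : R}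

theorem ssh_exists_eigenvector_of_interleave [Semiring R]
    {a b : ℤ → R} (heven : ∀ m, tp * b m + tm * b (m - 1) = μ * a m)
    (hodd : ∀ m, tm * a (m + 1) + tp * a m = μ * b m) (hb_left : b (-1) = 0) (hb_right : b N = 0)
    (ha : a 0 ≠ 0) :
    ∃ v, v ≠ 0 ∧ symmTridiagonal (2 * N + 1) (sshHopping tp tm) *ᵥ v = μ • v := by
  refine ⟨fun j => interleave a b (j : ℕ),
    Function.ne_iff.mpr ⟨0, by simpa [interleave] using ha⟩, ?_⟩
  funext i
  rw [Pi.smul_apply, smul_eq_mul, symmTridiagonal_mulVec_apply _ _ ?_ ?_ i]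
  · exact sshHopping_interleave_recurrence heven hodd i
  · simpa [hb_left] using interleave_two_mul_add_one a b (-1)
  · rw [← hb_right]
    exact_mod_cast interleave_two_mul_add_one a b N

theorem ssh_exists_eigenvector_zero [Field R] (htp : tp ≠ 0) (htm : tm ≠ 0) :
    ∃ v, v ≠ 0 ∧ symmTridiagonal (2 * N + 1) (sshHopping tp tm) *ᵥ v = (0 : R) • v := by
  -- the edge state: supported on the even sublattice, geometric with ratio `-t⁺/t⁻`
  refine ssh_exists_eigenvector_of_interleave (a := fun m => (-tp / tm) ^ m) (b := 0)
    (fun m => by simp) (fun m => ?_) rfl rfl (by simp)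
  rw [zpow_add_one₀ (by simp [htp, htm])]
  field_simp
  simp

end

theorem ssh_exists_eigenvector_of_sin_eq_zero {N : ℕ} {tp tm μ θ : ℝ} (htp : tp ≠ 0)
    (hθ : sin θ ≠ 0) (hθN : sin ((N + 1) * θ) = 0)
    (hμ : μ ^ 2 = tp ^ 2 + tm ^ 2 + 2 * tp * tm * cos θ) :
    ∃ v, v ≠ 0 ∧ symmTridiagonal (2 * N + 1) (sshHopping tp tm) *ᵥ v = μ • v := by
  refine ssh_exists_eigenvector_of_interleave
    (a := fun m => tm * sin (m * θ) + tp * sin ((m + 1) * θ)) (b := fun m => μ * sin ((m + 1) * θ))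
    (fun m => ?_) (fun m => ?_) (by simp) (by simpa using Or.inr hθN) (by simp [htp, hθ])
  · simp only [Int.cast_sub, Int.cast_one, sub_add_cancel]
    ring
  · have hsum : sin ((m + 1 + 1) * θ) + sin (m * θ) = 2 * sin ((m + 1) * θ) * cos θ := by
      rw [show ((m : ℝ) + 1 + 1) * θ = (m + 1) * θ + θ by ring,
        show (m : ℝ) * θ = (m + 1) * θ - θ by ring, sin_add, sin_sub]
      ring
    push_cast
    linear_combination tp * tm * hsum - sin ((m + 1) * θ) * hμ

theorem natCast_mul_pi_div_mem_Ioo {N k : ℕ} (hk1 : 1 ≤ k) (hkN : k ≤ N) :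
    k * π / (N + 1) ∈ Set.Ioo 0 π := by
  have hk : (1 : ℝ) ≤ k := by exact_mod_cast hk1
  have hkN' : (k : ℝ) < N + 1 := by exact_mod_cast Nat.lt_succ_of_le hkN
  constructor
  · positivity
  · rw [div_lt_iff₀ (by positivity)]
    nlinarith [pi_pos]

noncomputable def sshBandEnergy (δ : ℝ) (N k : ℕ) : ℝ :=
  √((1 - δ ^ 2) / 2 * cos (k * π / (N + 1)) + (1 + δ ^ 2) / 2)

section
variable (δ : ℝ) {N k : ℕ}

-- the radicand is the convex combination `(1 + cos θ)/2 * 1 + (1 - cos θ)/2 * δ²`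
theorem sshBand_radicand_nonneg (θ : ℝ) : 0 ≤ (1 - δ ^ 2) / 2 * cos θ + (1 + δ ^ 2) / 2 := by
  nlinarith [mul_nonneg (sub_nonneg.2 (cos_le_one θ)) (sq_nonneg δ), neg_one_le_cos θ]

theorem sshBand_radicand_pos {θ : ℝ} (hθ : -1 < cos θ) :
    0 < (1 - δ ^ 2) / 2 * cos θ + (1 + δ ^ 2) / 2 := by
  nlinarith [mul_nonneg (sub_nonneg.2 (cos_le_one θ)) (sq_nonneg δ)]

theorem sq_sshBandEnergy : sshBandEnergy δ N k ^ 2 = ((1 + δ) / 2) ^ 2 + ((1 - δ) / 2) ^ 2 +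
    2 * ((1 + δ) / 2) * ((1 - δ) / 2) * cos (k * π / (N + 1)) := by
  rw [sshBandEnergy, sq_sqrt (sshBand_radicand_nonneg δ _)]
  ring

theorem sshBandEnergy_pos (hk1 : 1 ≤ k) (hkN : k ≤ N) : 0 < sshBandEnergy δ N k := by
  obtain ⟨hθ0, hθπ⟩ := natCast_mul_pi_div_mem_Ioo hk1 hkN
  refine sqrt_pos.2 (sshBand_radicand_pos δ ?_)
  rw [← cos_pi]
  exact strictAntiOn_cos ⟨hθ0.le, hθπ.le⟩ ⟨pi_pos.le, le_rfl⟩ hθπ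

theorem sshBandEnergy_injOn {δ : ℝ} (hδ : δ ^ 2 ≠ 1) :
    Set.InjOn (sshBandEnergy δ N) (Set.Icc 1 N) := by
  intro k hk l hl hkl
  have hcos : cos (k * π / (N + 1)) = cos (l * π / (N + 1)) := by
    have := congrArg (· ^ 2) hkl
    simp only [sq_sshBandEnergy] at this
    have h1 : 1 - δ ^ 2 ≠ 0 := sub_ne_zero.2 (Ne.symm hδ)
    apply mul_left_cancel₀ h1
    linear_combination 2 * this
  have hθ := injOn_cos (Set.Ioo_subset_Icc_self (natCast_mul_pi_div_mem_Ioo hk.1 hk.2))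
    (Set.Ioo_subset_Icc_self (natCast_mul_pi_div_mem_Ioo hl.1 hl.2)) hcos
  field_simp at hθ
  exact_mod_cast hθ

theorem ssh_exists_eigenvector_of_sq_eq_sshBandEnergy_sq (hδ : δ ≠ -1) (hk1 : 1 ≤ k)
    (hkN : k ≤ N) {μ : ℝ} (hμ : μ ^ 2 = sshBandEnergy δ N k ^ 2) :
    ∃ v, v ≠ 0 ∧
      symmTridiagonal (2 * N + 1) (sshHopping ((1 + δ) / 2) ((1 - δ) / 2)) *ᵥ v = μ • v := by
  obtain ⟨hθ0, hθπ⟩ := natCast_mul_pi_div_mem_Ioo hk1 hkN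
  refine ssh_exists_eigenvector_of_sin_eq_zero ?_ (sin_pos_of_pos_of_lt_pi hθ0 hθπ).ne' ?_
    (hμ.trans (sq_sshBandEnergy δ))
  · exact fun h => hδ (by linarith)
  · rw [mul_div_cancel₀ _ (by positivity)]
    exact sin_nat_mul_pi k

end

theorem ssh_spectrum_general (N : ℕ) (δ : ℝ) (hδ1 : -1 < δ) (hδ2 : δ < 1)
    (H : Matrix (Fin (2 * N + 1)) (Fin (2 * N + 1)) ℝ)
    (hH : ∀ i j : Fin (2 * N + 1), H i j =
      if (i : ℕ) + 1 = (j : ℕ) then (if Even (i : ℕ) then (1 + δ) / 2 else (1 - δ) / 2)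
      else if (j : ℕ) + 1 = (i : ℕ) then (if Even (j : ℕ) then (1 + δ) / 2 else (1 - δ) / 2)
      else 0) :
    (∀ μ : ℝ, (∃ v : Fin (2 * N + 1) → ℝ, v ≠ 0 ∧ H.mulVec v = μ • v) ↔
      μ ∈ ({0} ∪ {μ : ℝ | ∃ k : ℕ, 1 ≤ k ∧ k ≤ N ∧
        (μ = Real.sqrt ((1 - δ ^ 2) / 2 * Real.cos (k * π / (N + 1)) + (1 + δ ^ 2) / 2) ∨
         μ = -Real.sqrt ((1 - δ ^ 2) / 2 * Real.cos (k * π / (N + 1)) + (1 + δ ^ 2) / 2))} :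
          Set ℝ)) ∧
    ({0} ∪ {μ : ℝ | ∃ k : ℕ, 1 ≤ k ∧ k ≤ N ∧
        (μ = Real.sqrt ((1 - δ ^ 2) / 2 * Real.cos (k * π / (N + 1)) + (1 + δ ^ 2) / 2) ∨
         μ = -Real.sqrt ((1 - δ ^ 2) / 2 * Real.cos (k * π / (N + 1)) + (1 + δ ^ 2) / 2))} :
          Set ℝ).ncard = 2 * N + 1 := by
  obtain rfl : H = symmTridiagonal (2 * N + 1) (sshHopping ((1 + δ) / 2) ((1 - δ) / 2)) := by
    ext i j
    simp only [hH, symmTridiagonal, sshHopping, of_apply, Int.even_coe_nat]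
  have hcard := ncard_zero_union_pm_Icc (sshBandEnergy_injOn (N := N) (δ := δ) (by nlinarith))
    fun k hk => sshBandEnergy_pos δ hk.1 hk.2
  refine ⟨fun μ => exists_eigenvector_iff_mem_of_ncard_eq _
    (hcard.trans (Fintype.card_fin _).symm) ?_ μ, hcard⟩
  rintro ν (rfl | ⟨k, hk1, hkN, rfl | rfl⟩)
  · exact ssh_exists_eigenvector_zero (by linarith) (by linarith)
  · exact ssh_exists_eigenvector_of_sq_eq_sshBandEnergy_sq δ hδ1.ne' hk1 hkN rfl
  · exact ssh_exists_eigenvector_of_sq_eq_sshBandEnergy_sq δ hδ1.ne' hk1 hkN (neg_sq _)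

/-- The SSH single-particle Hamiltonian on `2N+1` sites (0-based indexing):
zero diagonal, and the coupling between sites `j` and `j+1` equals `t⁺` if `j` is even
and `t⁻` if `j` is odd. Its spectrum consists exactly of `0` together with
`±√(((1−δ²)/2)cos(kπ/(N+1)) + (1+δ²)/2)` for `k = 1,…,N`, and these values are
pairwise distinct, giving all `2N+1` eigenvalues. -/
theorem ssh_spectrum (N : ℕ) (hN : 1 ≤ N) (δ : ℝ) (hδ1 : -1 < δ) (hδ2 : δ < 1)
    (H : Matrix (Fin (2 * N + 1)) (Fin (2 * N + 1)) ℝ)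
    (hH : ∀ i j : Fin (2 * N + 1), H i j =
      if (i : ℕ) + 1 = (j : ℕ) then (if Even (i : ℕ) then (1 + δ) / 2 else (1 - δ) / 2)
      else if (j : ℕ) + 1 = (i : ℕ) then (if Even (j : ℕ) then (1 + δ) / 2 else (1 - δ) / 2)
      else 0) :
    (∀ μ : ℝ, (∃ v : Fin (2 * N + 1) → ℝ, v ≠ 0 ∧ H.mulVec v = μ • v) ↔
      μ ∈ ({0} ∪ {μ : ℝ | ∃ k : ℕ, 1 ≤ k ∧ k ≤ N ∧
        (μ = Real.sqrt ((1 - δ ^ 2) / 2 * Real.cos (k * π / (N + 1)) + (1 + δ ^ 2) / 2) ∨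
         μ = -Real.sqrt ((1 - δ ^ 2) / 2 * Real.cos (k * π / (N + 1)) + (1 + δ ^ 2) / 2))} :
          Set ℝ)) ∧
    ({0} ∪ {μ : ℝ | ∃ k : ℕ, 1 ≤ k ∧ k ≤ N ∧
        (μ = Real.sqrt ((1 - δ ^ 2) / 2 * Real.cos (k * π / (N + 1)) + (1 + δ ^ 2) / 2) ∨
         μ = -Real.sqrt ((1 - δ ^ 2) / 2 * Real.cos (k * π / (N + 1)) + (1 + δ ^ 2) / 2))} :
          Set ℝ).ncard = 2 * N + 1 :=
  ssh_spectrum_general N δ hδ1 hδ2 H hH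
end

section
/- Let N ≥ 1 and −1 < δ < 1. Define π_x = (2/(1−δ²))x² − (1+δ²)/(1−δ²), Q_{2n}(x) = ((1+δ)/2)U_n(π_x) + ((1−δ)/2)U_{n−1}(π_x) for 0 ≤ n ≤ N, Q_{2n+1}(x) = x U_n(π_x) for 0 ≤ n ≤ N−1. If x is a real number satisfying x U_N(π_x) = 0, then the vector Q(x) = (Q_0(x), …, Q_{2N}(x)) satisfies H Q(x) = x Q(x), where H is the (2N+1)×(2N+1) tridiagonal matrix with zero diagonal and off-diagonal entries alternating (1+δ)/2 and (1−δ)/2. -/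
lemma fin_sum_ite_right {m : ℕ} (k : ℕ) (f : Fin m → ℝ) :
    ∑ j : Fin m, (if k = (j : ℕ) then f j else 0) =
      if h : k < m then f ⟨k, h⟩ else 0 := by
  split_ifs with h
  · rw [Finset.sum_eq_single (⟨k, h⟩ : Fin m)]
    · simp
    · intro j _ hj
      rw [if_neg]
      intro hk
      exact hj (Fin.ext hk.symm)
    · simp
  · apply Finset.sum_eq_zero
    intro j _
    rw [if_neg]
    have := j.isLt
    omega

lemma fin_sum_ite_left {m : ℕ} (k : ℕ) (f : Fin m → ℝ) :
    ∑ j : Fin m, (if (j : ℕ) + 1 = k then f j else 0) =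
      if h : k - 1 < m ∧ 1 ≤ k then f ⟨k - 1, h.1⟩ else 0 := by
  split_ifs with h
  · rw [Finset.sum_eq_single (⟨k - 1, h.1⟩ : Fin m)]
    · rw [if_pos]
      simp only [Fin.val_mk]
      omega
    · intro j _ hj
      rw [if_neg]
      intro hk
      apply hj
      apply Fin.ext
      simp only [Fin.val_mk]
      omega
    · simp
  · apply Finset.sum_eq_zero
    intro j _
    rw [if_neg]
    have := j.isLt
    omega

/-- If `x U_N(π_x) = 0`, the vector `Q(x) = (Q_0(x),…,Q_{2N}(x))` built from the doubled
Chebyshev polynomials is an eigenvector of the SSH matrix `H` with eigenvalue `x`. -/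
theorem ssh_eigenvector_chebyshev (N : ℕ) (hN : 1 ≤ N) (δ : ℝ) (hδ1 : -1 < δ) (hδ2 : δ < 1)
    (U : ℤ → ℝ → ℝ)
    (hUm1 : ∀ x, U (-1) x = 0)
    (hU0 : ∀ x, U 0 x = 1)
    (hUrec : ∀ n : ℤ, 0 ≤ n → ∀ x : ℝ, 2 * x * U n x = U (n + 1) x + U (n - 1) x)
    (π : ℝ → ℝ)
    (hπ : ∀ x, π x = 2 / (1 - δ ^ 2) * x ^ 2 - (1 + δ ^ 2) / (1 - δ ^ 2))
    (Qe Qo : ℤ → ℝ → ℝ)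
    (hQe : ∀ (n : ℤ) (x : ℝ), Qe n x = (1 + δ) / 2 * U n (π x) + (1 - δ) / 2 * U (n - 1) (π x))
    (hQo : ∀ (n : ℤ) (x : ℝ), Qo n x = x * U n (π x))
    (H : Matrix (Fin (2 * N + 1)) (Fin (2 * N + 1)) ℝ)
    (hH : ∀ i j : Fin (2 * N + 1), H i j =
      if (i : ℕ) + 1 = (j : ℕ) then (if Even (i : ℕ) then (1 + δ) / 2 else (1 - δ) / 2)
      else if (j : ℕ) + 1 = (i : ℕ) then (if Even (j : ℕ) then (1 + δ) / 2 else (1 - δ) / 2)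
      else 0)
    (x : ℝ) (hx : x * U N (π x) = 0) :
    H.mulVec (fun i : Fin (2 * N + 1) =>
        if Even (i : ℕ) then Qe (((i : ℕ) / 2 : ℕ) : ℤ) x else Qo (((i : ℕ) / 2 : ℕ) : ℤ) x) =
      x • (fun i : Fin (2 * N + 1) =>
        if Even (i : ℕ) then Qe (((i : ℕ) / 2 : ℕ) : ℤ) x else Qo (((i : ℕ) / 2 : ℕ) : ℤ) x) := by
  have hd : (1:ℝ) - δ ^ 2 ≠ 0 := by nlinarith
  have hp2 : (1 - δ ^ 2) * π x = 2 * x ^ 2 - (1 + δ ^ 2) := by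
    rw [hπ]; field_simp
  -- scalar identities
  have factA : ∀ n : ℕ,
      (1 + δ) / 2 * Qe (n : ℤ) x + (1 - δ) / 2 * Qe ((n : ℤ) + 1) x = x * Qo (n : ℤ) x := by
    intro n
    have hrec := hUrec (n : ℤ) (Int.natCast_nonneg n) (π x)
    rw [hQe, hQe, hQo, add_sub_cancel_right]
    linear_combination (-(1 - δ ^ 2) / 4) * hrec + (U (n : ℤ) (π x) / 2) * hp2
  have factB : ∀ n : ℤ,
      (1 - δ) / 2 * Qo (n - 1) x + (1 + δ) / 2 * Qo n x = x * Qe n x := by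
    intro n
    rw [hQo, hQo, hQe]; ring
  have factC : (1 + δ) / 2 * Qo 0 x = x * Qe 0 x := by
    rw [hQo, hQe]
    rw [show (0 : ℤ) - 1 = -1 by ring, hUm1]
    ring
  have factD : (1 - δ) / 2 * Qo ((N : ℤ) - 1) x = x * Qe (N : ℤ) x := by
    rw [hQo, hQe]
    linear_combination (-(1 + δ) / 2) * hx
  set v : Fin (2 * N + 1) → ℝ := fun i =>
      if Even (i : ℕ) then Qe (((i : ℕ) / 2 : ℕ) : ℤ) x else Qo (((i : ℕ) / 2 : ℕ) : ℤ) x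
      with hv
  have hvE : ∀ (j : Fin (2 * N + 1)) (n : ℕ), (j : ℕ) = 2 * n → v j = Qe (n : ℤ) x := by
    intro j n hj
    simp only [hv]
    rw [if_pos (by rw [Nat.even_iff]; omega), show (j : ℕ) / 2 = n by omega]
  have hvO : ∀ (j : Fin (2 * N + 1)) (n : ℕ), (j : ℕ) = 2 * n + 1 → v j = Qo (n : ℤ) x := by
    intro j n hj
    simp only [hv]
    rw [if_neg (by rw [Nat.even_iff]; omega), show (j : ℕ) / 2 = n by omega]
  funext i
  simp only [Matrix.mulVec, dotProduct, Pi.smul_apply, smul_eq_mul]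
  have hsplit : ∀ j : Fin (2 * N + 1), H i j * v j =
      (if (i : ℕ) + 1 = (j : ℕ) then
        (if Even (i : ℕ) then (1 + δ) / 2 else (1 - δ) / 2) * v j else 0)
      + (if (j : ℕ) + 1 = (i : ℕ) then
        (if Even (j : ℕ) then (1 + δ) / 2 else (1 - δ) / 2) * v j else 0) := by
    intro j
    rw [hH]
    by_cases h1 : (i : ℕ) + 1 = (j : ℕ)
    · have h2 : ¬((j : ℕ) + 1 = (i : ℕ)) := by omega
      simp [h1, h2]
    · by_cases h2 : (j : ℕ) + 1 = (i : ℕ) <;> simp [h1, h2]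
  simp_rw [hsplit]
  rw [Finset.sum_add_distrib, fin_sum_ite_right, fin_sum_ite_left]
  have hlt := i.isLt
  rcases Nat.even_or_odd (i : ℕ) with ⟨n, hn⟩ | ⟨n, hn⟩
  · -- i = 2n
    have hn' : (i : ℕ) = 2 * n := by omega
    have hnN : n ≤ N := by omega
    rcases Nat.eq_zero_or_pos n with rfl | hn1
    · -- n = 0 : leftmost site
      rw [dif_pos (by omega), dif_neg (by omega)]
      rw [if_pos (by rw [Nat.even_iff]; omega), hvE i 0 (by omega),
        hvO ⟨(i : ℕ) + 1, by omega⟩ 0 (by simp [hn'])]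
      simpa using factC
    · rcases eq_or_lt_of_le hnN with heq | hnN'
      · -- n = N : rightmost site
        rw [dif_neg (by omega), dif_pos (by omega)]
        rw [if_neg (by simp only [Fin.val_mk, Nat.even_iff]; omega)]
        rw [hvE i N (by omega),
          hvO ⟨(i : ℕ) - 1, by omega⟩ (N - 1) (by simp only [Fin.val_mk]; omega)]
        rw [show ((N - 1 : ℕ) : ℤ) = (N : ℤ) - 1 by omega]
        linarith [factD]
      · -- interior even site
        rw [dif_pos (by omega), dif_pos (by omega)]
        rw [if_pos (by rw [Nat.even_iff]; omega),
          if_neg (by simp only [Fin.val_mk, Nat.even_iff]; omega)]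
        rw [hvE i n hn', hvO ⟨(i : ℕ) + 1, by omega⟩ n (by simp only [Fin.val_mk]; omega),
          hvO ⟨(i : ℕ) - 1, by omega⟩ (n - 1) (by simp only [Fin.val_mk]; omega)]
        rw [show ((n - 1 : ℕ) : ℤ) = (n : ℤ) - 1 by omega]
        linarith [factB (n : ℤ)]
  · -- i = 2n + 1 : odd site
    have hn' : (i : ℕ) = 2 * n + 1 := by omega
    rw [dif_pos (by omega), dif_pos (by omega)]
    rw [if_neg (by rw [Nat.even_iff]; omega),
      if_pos (by simp only [Fin.val_mk, Nat.even_iff]; omega)]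
    rw [hvO i n hn', hvE ⟨(i : ℕ) + 1, by omega⟩ (n + 1) (by simp only [Fin.val_mk]; omega),
      hvE ⟨(i : ℕ) - 1, by omega⟩ n (by simp only [Fin.val_mk]; omega)]
    rw [show ((n + 1 : ℕ) : ℤ) = (n : ℤ) + 1 by omega]
    linarith [factA n]
end

section
/- Let −1 < δ < 1, μ⁺, μ⁻ real, and N ≥ 1. The (2N+1)×(2N+1) tridiagonal matrix with diagonal entries alternating μ⁺, μ⁻, μ⁺, …, μ⁺ and off-diagonal entries alternating t⁺ = (1+δ)/2 and t⁻ = (1−δ)/2 has spectrum { μ⁺ } ∪ { (μ⁺+μ⁻ ± √((μ⁺−μ⁻)² + 2(1+δ²) + 2(1−δ²)cos(kπ/(N+1))))/2 : k = 1,…,N }; in particular the single remaining eigenvalue besides the N pairs x_k^± equals μ⁺. -/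
open Real Finset

lemma tridiag_row {n : ℕ} (H : Matrix (Fin n) (Fin n) ℝ)
    (hz : ∀ i j : Fin n, (j:ℕ)+1 ≠ (i:ℕ) → i ≠ j → (i:ℕ)+1 ≠ (j:ℕ) → H i j = 0)
    (v : Fin n → ℝ) (i : Fin n) :
    H.mulVec v i =
      (if h : 0 < (i:ℕ) then
          H i ⟨(i:ℕ)-1, lt_of_le_of_lt (Nat.sub_le _ _) i.isLt⟩
            * v ⟨(i:ℕ)-1, lt_of_le_of_lt (Nat.sub_le _ _) i.isLt⟩ else 0)
      + H i i * v i
      + (if h : (i:ℕ)+1 < n then H i ⟨(i:ℕ)+1, h⟩ * v ⟨(i:ℕ)+1, h⟩ else 0) := by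
  have key : ∀ j : Fin n, H i j * v j =
      (if (j:ℕ)+1 = (i:ℕ) then H i j * v j else 0)
      + (if j = i then H i j * v j else 0)
      + (if (i:ℕ)+1 = (j:ℕ) then H i j * v j else 0) := by
    intro j
    rcases eq_or_ne j i with rfl | h2
    · simp
    · rw [if_neg h2]
      by_cases h1 : (j:ℕ)+1 = (i:ℕ)
      · rw [if_pos h1, if_neg (by omega)]; ring
      · rw [if_neg h1]
        by_cases h3 : (i:ℕ)+1 = (j:ℕ)
        · rw [if_pos h3]; ring
        · rw [if_neg h3, hz i j h1 (fun h => h2 h.symm) h3]; ring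
  have hsum : H.mulVec v i = ∑ j : Fin n, H i j * v j := rfl
  rw [hsum]
  calc ∑ j : Fin n, H i j * v j
      = ∑ j : Fin n, ((if (j:ℕ)+1 = (i:ℕ) then H i j * v j else 0)
      + (if j = i then H i j * v j else 0)
      + (if (i:ℕ)+1 = (j:ℕ) then H i j * v j else 0)) := by
        exact Finset.sum_congr rfl fun j _ => key j
    _ = (∑ j : Fin n, if (j:ℕ)+1 = (i:ℕ) then H i j * v j else 0)
      + (∑ j : Fin n, if j = i then H i j * v j else 0)
      + (∑ j : Fin n, if (i:ℕ)+1 = (j:ℕ) then H i j * v j else 0) := by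
        rw [Finset.sum_add_distrib, Finset.sum_add_distrib]
    _ = _ := by
        congr 1
        · congr 1
          · by_cases hp : 0 < (i:ℕ)
            · rw [dif_pos hp]
              have : ∀ j : Fin n, ((j:ℕ)+1 = (i:ℕ)) ↔
                  j = (⟨(i:ℕ)-1, lt_of_le_of_lt (Nat.sub_le _ _) i.isLt⟩ : Fin n) := by
                intro j
                constructor
                · intro h; apply Fin.ext; simp; omega
                · intro h; subst h; simp; omega
              simp_rw [this]
              simp
            · rw [dif_neg hp]
              apply Finset.sum_eq_zero
              intro j _
              rw [if_neg]; omega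
          · simp
        · by_cases hp : (i:ℕ)+1 < n
          · rw [dif_pos hp]
            have : ∀ j : Fin n, ((i:ℕ)+1 = (j:ℕ)) ↔ j = (⟨(i:ℕ)+1, hp⟩ : Fin n) := by
              intro j
              constructor
              · intro h; apply Fin.ext; simp; omega
              · intro h; subst h; simp
            simp_rw [this]
            simp
          · rw [dif_neg hp]
            apply Finset.sum_eq_zero
            intro j _
            rw [if_neg]
            have := j.isLt; omega

lemma sin_add_two_mul (x θ : ℝ) :
    Real.sin x + Real.sin (x + 2*θ) = 2 * Real.cos θ * Real.sin (x + θ) := by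
  have h1 : x + 2*θ = (x + θ) + θ := by ring
  have h2 : Real.sin x = Real.sin ((x + θ) - θ) := by ring_nf
  rw [h1, Real.sin_add, h2, Real.sin_sub, Real.sin_add]
  ring

set_option maxHeartbeats 1000000 in
lemma ssh_construct (N : ℕ) (hN : 1 ≤ N)
    (δ μp μm : ℝ) (hδ1 : -1 < δ) (hδ2 : δ < 1)
    (H : Matrix (Fin (2 * N + 1)) (Fin (2 * N + 1)) ℝ)
    (hH : ∀ i j : Fin (2 * N + 1), H i j =
      if i = j then (if Even (i : ℕ) then μp else μm)
      else if (i : ℕ) + 1 = (j : ℕ) then (if Even (i : ℕ) then (1 + δ) / 2 else (1 - δ) / 2)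
      else if (j : ℕ) + 1 = (i : ℕ) then (if Even (j : ℕ) then (1 + δ) / 2 else (1 - δ) / 2)
      else 0)
    (μ : ℝ)
    (hμ : μ = μp ∨ ∃ k : ℕ, 1 ≤ k ∧ k ≤ N ∧
        (μ = (μp + μm + Real.sqrt ((μp - μm) ^ 2 + 2 * (1 + δ ^ 2)
              + 2 * (1 - δ ^ 2) * Real.cos (k * π / (N + 1)))) / 2 ∨
         μ = (μp + μm - Real.sqrt ((μp - μm) ^ 2 + 2 * (1 + δ ^ 2)
              + 2 * (1 - δ ^ 2) * Real.cos (k * π / (N + 1)))) / 2)) :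
    ∃ v : Fin (2 * N + 1) → ℝ, v ≠ 0 ∧ H.mulVec v = μ • v := by
  have h1δ : (0:ℝ) < 1 + δ := by linarith
  have h2δ : (0:ℝ) < 1 - δ := by linarith
  have hz : ∀ i j : Fin (2*N+1), (j:ℕ)+1 ≠ (i:ℕ) → i ≠ j → (i:ℕ)+1 ≠ (j:ℕ) → H i j = 0 := by
    intro i j h1 h2 h3
    rw [hH, if_neg h2, if_neg h3, if_neg h1]
  have hdiag : ∀ i : Fin (2*N+1), H i i = if Even (i:ℕ) then μp else μm := by
    intro i; rw [hH, if_pos rfl]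
  have hsub : ∀ i j : Fin (2*N+1), (j:ℕ)+1 = (i:ℕ) →
      H i j = if Even (j:ℕ) then (1+δ)/2 else (1-δ)/2 := by
    intro i j h
    rw [hH, if_neg (by intro hh; rw [hh] at h; omega), if_neg (by omega), if_pos h]
  have hsup : ∀ i j : Fin (2*N+1), (i:ℕ)+1 = (j:ℕ) →
      H i j = if Even (i:ℕ) then (1+δ)/2 else (1-δ)/2 := by
    intro i j h
    rw [hH, if_neg (by intro hh; rw [hh] at h; omega), if_pos h]
  rcases hμ with rfl | ⟨k, hk1, hk2, hμ⟩
  · -- eigenvalue μp with vector supported on even sites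
    set w : Fin (2*N+1) → ℝ :=
      fun j => if Even (j:ℕ) then (-((1+δ)/(1-δ))) ^ ((j:ℕ)/2) else 0 with hw
    have hwval : ∀ j : Fin (2*N+1),
        w j = if Even (j:ℕ) then (-((1+δ)/(1-δ))) ^ ((j:ℕ)/2) else 0 := fun _ => rfl
    refine ⟨w, ?_, ?_⟩
    · intro h0
      have := congrFun h0 ⟨0, by omega⟩
      rw [hwval] at this
      simp at this
    · funext i
      rw [tridiag_row H hz _ i, Pi.smul_apply, smul_eq_mul]
      rcases Nat.even_or_odd (i:ℕ) with he | ho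
      · have he' := Nat.even_iff.mp he
        have hprev : (if h : 0 < (i:ℕ) then
            H i ⟨(i:ℕ)-1, lt_of_le_of_lt (Nat.sub_le _ _) i.isLt⟩
              * w ⟨(i:ℕ)-1, lt_of_le_of_lt (Nat.sub_le _ _) i.isLt⟩ else 0) = 0 := by
          by_cases hp : 0 < (i:ℕ)
          · rw [dif_pos hp, hwval, if_neg (by rw [Nat.even_iff]; simp; omega), mul_zero]
          · rw [dif_neg hp]
        have hnext : (if h : (i:ℕ)+1 < 2*N+1 then
            H i ⟨(i:ℕ)+1, h⟩ * w ⟨(i:ℕ)+1, h⟩ else 0) = 0 := by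
          by_cases hp : (i:ℕ)+1 < 2*N+1
          · rw [dif_pos hp, hwval, if_neg (by rw [Nat.even_iff]; simp; omega), mul_zero]
          · rw [dif_neg hp]
        rw [hprev, hnext, hdiag, if_pos he, hwval, if_pos he]
        ring
      · have ho' : (i:ℕ) % 2 = 1 := Nat.odd_iff.mp ho
        have hne : ¬ Even (i:ℕ) := by rw [Nat.even_iff]; omega
        have hp : 0 < (i:ℕ) := by omega
        have hq : (i:ℕ)+1 < 2*N+1 := by have := i.isLt; omega
        rw [dif_pos hp, dif_pos hq, hdiag, if_neg hne]
        rw [hsub i ⟨(i:ℕ)-1, lt_of_le_of_lt (Nat.sub_le _ _) i.isLt⟩ (by simp; omega),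
          hsup i ⟨(i:ℕ)+1, hq⟩ (by simp)]
        rw [hwval, hwval, hwval]
        rw [if_pos (by rw [Nat.even_iff]; simp; omega : Even ((⟨(i:ℕ)-1,
          lt_of_le_of_lt (Nat.sub_le _ _) i.isLt⟩ : Fin (2*N+1)) : ℕ)),
          if_pos (by rw [Nat.even_iff]; simp; omega : Even ((⟨(i:ℕ)-1,
          lt_of_le_of_lt (Nat.sub_le _ _) i.isLt⟩ : Fin (2*N+1)) : ℕ)),
          if_pos (by rw [Nat.even_iff]; simp; omega : Even ((⟨(i:ℕ)+1, hq⟩ : Fin (2*N+1)) : ℕ)),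
          if_neg hne, if_neg hne]
        simp only
        have hdiv : ((i:ℕ)+1)/2 = ((i:ℕ)-1)/2 + 1 := by omega
        rw [hdiv, pow_succ]
        field_simp
        ring
  · -- eigenvalues x_k^±
    set θ : ℝ := (k:ℝ) * π / ((N:ℝ) + 1) with hθ
    set c : ℝ := Real.cos θ with hc
    set R : ℝ := (μp - μm) ^ 2 + 2 * (1 + δ ^ 2) + 2 * (1 - δ ^ 2) * c with hR
    set s : ℝ := Real.sqrt R with hs
    have hkpos : (0:ℝ) < (k:ℝ) := by exact_mod_cast Nat.lt_of_lt_of_le Nat.zero_lt_one hk1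
    have hθpos : 0 < θ := by
      apply div_pos (mul_pos hkpos Real.pi_pos)
      positivity
    have hθlt : θ < π := by
      rw [hθ, div_lt_iff₀ (by positivity)]
      have : (k:ℝ) < (N:ℝ) + 1 := by exact_mod_cast Nat.lt_succ_of_le hk2
      nlinarith [Real.pi_pos]
    have hc1 : -1 < c := by
      have := Real.cos_lt_cos_of_nonneg_of_le_pi (le_of_lt hθpos) le_rfl hθlt
      rw [Real.cos_pi] at this
      linarith
    have hd2 : (0:ℝ) < 1 - δ^2 := by nlinarith
    have hR0 : 0 ≤ R := by
      nlinarith [mul_pos hd2 (by linarith : (0:ℝ) < c + 1), sq_nonneg (μp - μm)]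
    have hs2 : s^2 = R := Real.sq_sqrt hR0
    have hs0 : 0 ≤ s := Real.sqrt_nonneg _
    have hsgt : (μp - μm)^2 < s^2 := by
      rw [hs2, hR]
      nlinarith [mul_pos hd2 (by linarith : (0:ℝ) < c + 1)]
    have hb : μ - μm ≠ 0 := by
      rcases hμ with rfl | rfl
      · have : 0 < (μp - μm) + s := by nlinarith
        intro h; rw [show (μp + μm + s)/2 - μm = ((μp - μm) + s)/2 by ring] at h; linarith
      · have : (μp - μm) - s < 0 := by nlinarith
        intro h; rw [show (μp + μm - s)/2 - μm = ((μp - μm) - s)/2 by ring] at h; linarith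
    have hs2' : s^2 = (μp - μm) ^ 2 + 2 * (1 + δ ^ 2) + 2 * (1 - δ ^ 2) * c := by
      rw [hs2, hR]
    have hab : (μ - μp) * (μ - μm)
        = ((1+δ)/2)^2 + ((1-δ)/2)^2 + 2*c*(((1+δ)/2)*((1-δ)/2)) := by
      rcases hμ with rfl | rfl
      · linear_combination hs2' / 4
      · linear_combination hs2' / 4
    set u : ℕ → ℝ := fun m => (1+δ) * Real.sin (((m:ℝ)+1)*θ) + (1-δ) * Real.sin ((m:ℝ)*θ)
      with hu
    have huval : ∀ m : ℕ,
        u m = (1+δ) * Real.sin (((m:ℝ)+1)*θ) + (1-δ) * Real.sin ((m:ℝ)*θ) := fun _ => rfl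
    clear_value u
    have hsθ : 0 < Real.sin θ := Real.sin_pos_of_pos_of_lt_pi hθpos hθlt
    have hu0 : u 0 = (1+δ) * Real.sin θ := by rw [huval]; norm_num
    have hu1 : u 1 = (1+δ) * Real.sin (2*θ) + (1-δ) * Real.sin θ := by
      rw [huval]; norm_num
    have hrec : ∀ m : ℕ, u m + u (m+2) = 2*c*(u (m+1)) := by
      intro m
      rw [huval, huval, huval]
      push_cast
      have e1 := sin_add_two_mul (((m:ℝ)+1)*θ) θ
      have e2 := sin_add_two_mul ((m:ℝ)*θ) θ
      rw [show ((m:ℝ)+1)*θ + 2*θ = ((m:ℝ)+2+1)*θ by ring,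
        show ((m:ℝ)+1)*θ + θ = ((m:ℝ)+1+1)*θ by ring] at e1
      rw [show (m:ℝ)*θ + 2*θ = ((m:ℝ)+2)*θ by ring,
        show (m:ℝ)*θ + θ = ((m:ℝ)+1)*θ by ring] at e2
      linear_combination (1+δ) * e1 + (1-δ) * e2
    have hend : Real.sin (((N:ℝ)+1)*θ) = 0 := by
      have hNθ : ((N:ℝ)+1)*θ = (k:ℝ)*π := by
        rw [hθ]; field_simp
      rw [hNθ]
      exact Real.sin_nat_mul_pi k
    have hsN : Real.sin ((N:ℝ)*θ) = -(Real.cos (((N:ℝ)+1)*θ)) * Real.sin θ := by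
      rw [show (N:ℝ)*θ = ((N:ℝ)+1)*θ - θ by ring, Real.sin_sub, hend]
      ring
    have hsN1 : Real.sin (((N:ℝ)-1)*θ)
        = -(Real.cos (((N:ℝ)+1)*θ)) * (2 * Real.sin θ * c) := by
      rw [show ((N:ℝ)-1)*θ = ((N:ℝ)+1)*θ - 2*θ by ring, Real.sin_sub, hend,
        Real.sin_two_mul]
      ring
    have huN : u N = (1-δ) * (-(Real.cos (((N:ℝ)+1)*θ)) * Real.sin θ) := by
      rw [huval, hsN, hend]; ring
    have huN1 : u (N-1) = (1+δ) * (-(Real.cos (((N:ℝ)+1)*θ)) * Real.sin θ)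
        + (1-δ) * (-(Real.cos (((N:ℝ)+1)*θ)) * (2 * Real.sin θ * c)) := by
      rw [huval]
      have hc1' : ((N-1 : ℕ):ℝ) = (N:ℝ) - 1 := by
        have : (1:ℕ) ≤ N := hN
        push_cast [this]
        ring
      rw [hc1', show (N:ℝ)-1+1 = (N:ℝ) by ring, hsN, hsN1]
    -- division-free key identities
    have key0 : (1+δ)/2 * ((1+δ)/2 * u 0 + (1-δ)/2 * u 1) = (μ - μp) * (μ - μm) * u 0 := by
      rw [hu0, hu1, Real.sin_two_mul]
      linear_combination (-((1+δ) * Real.sin θ)) * hab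
    have keyN : (1-δ)/2 * ((1+δ)/2 * u (N-1) + (1-δ)/2 * u N) = (μ - μp) * (μ - μm) * u N := by
      rw [huN, huN1]
      linear_combination (-((1-δ) * (-(Real.cos (((N:ℝ)+1)*θ)) * Real.sin θ))) * hab
    have keym : ∀ m : ℕ,
        (1-δ)/2 * ((1+δ)/2 * u m + (1-δ)/2 * u (m+1))
        + (1+δ)/2 * ((1+δ)/2 * u (m+1) + (1-δ)/2 * u (m+2))
        = (μ - μp) * (μ - μm) * u (m+1) := by
      intro m
      linear_combination (-(u (m+1))) * hab + ((1+δ)/2*((1-δ)/2)) * (hrec m)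
    set w : Fin (2*N+1) → ℝ := fun j => if Even (j:ℕ) then u ((j:ℕ)/2)
      else ((1+δ)/2 * u ((j:ℕ)/2) + (1-δ)/2 * u ((j:ℕ)/2 + 1)) / (μ - μm) with hwdef
    have hwval : ∀ j : Fin (2*N+1), w j = if Even (j:ℕ) then u ((j:ℕ)/2)
        else ((1+δ)/2 * u ((j:ℕ)/2) + (1-δ)/2 * u ((j:ℕ)/2 + 1)) / (μ - μm) := fun _ => rfl
    refine ⟨w, ?_, ?_⟩
    · intro h0
      have h1 := congrFun h0 ⟨0, by omega⟩
      rw [hwval] at h1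
      simp only [Pi.zero_apply] at h1
      norm_num at h1
      rw [hu0] at h1
      nlinarith
    · funext i
      rw [tridiag_row H hz _ i, Pi.smul_apply, smul_eq_mul]
      rcases Nat.even_or_odd (i:ℕ) with he | ho
      · have he' := Nat.even_iff.mp he
        by_cases hi0 : (i:ℕ) = 0
        · -- first row
          rw [dif_neg (by omega), dif_pos (by omega : (i:ℕ)+1 < 2*N+1)]
          rw [hdiag, if_pos he, hsup i ⟨(i:ℕ)+1, by omega⟩ (by simp), if_pos he]
          rw [hwval, hwval]
          rw [if_pos he, if_neg (by rw [Nat.even_iff]; simp; omega :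
            ¬ Even ((⟨(i:ℕ)+1, by omega⟩ : Fin (2*N+1)) : ℕ))]
          simp only
          rw [show ((i:ℕ)+1)/2 = 0 by omega, show ((i:ℕ))/2 = 0 by omega]
          rw [zero_add, ← mul_div_assoc, key0]
          field_simp
          ring
        · by_cases hiN : (i:ℕ) = 2*N
          · -- last row
            rw [dif_pos (by omega), dif_neg (by omega)]
            rw [hdiag, if_pos he,
              hsub i ⟨(i:ℕ)-1, lt_of_le_of_lt (Nat.sub_le _ _) i.isLt⟩ (by simp; omega)]
            rw [if_neg (by rw [Nat.even_iff]; simp; omega :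
              ¬ Even ((⟨(i:ℕ)-1, lt_of_le_of_lt (Nat.sub_le _ _) i.isLt⟩ : Fin (2*N+1)) : ℕ))]
            rw [hwval, hwval, if_pos he,
              if_neg (by rw [Nat.even_iff]; simp; omega :
              ¬ Even ((⟨(i:ℕ)-1, lt_of_le_of_lt (Nat.sub_le _ _) i.isLt⟩ : Fin (2*N+1)) : ℕ))]
            simp only
            rw [show ((i:ℕ)-1)/2 = N-1 by omega, show ((i:ℕ))/2 = N by omega,
              show N-1+1 = N by omega]
            rw [← mul_div_assoc, keyN]
            field_simp
            ring
          · -- interior even row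
            rw [dif_pos (by omega), dif_pos (by have := i.isLt; omega : (i:ℕ)+1 < 2*N+1)]
            rw [hdiag, if_pos he,
              hsub i ⟨(i:ℕ)-1, lt_of_le_of_lt (Nat.sub_le _ _) i.isLt⟩ (by simp; omega),
              hsup i ⟨(i:ℕ)+1, by have := i.isLt; omega⟩ (by simp), if_pos he]
            rw [if_neg (by rw [Nat.even_iff]; simp; omega :
              ¬ Even ((⟨(i:ℕ)-1, lt_of_le_of_lt (Nat.sub_le _ _) i.isLt⟩ : Fin (2*N+1)) : ℕ))]
            rw [hwval, hwval, hwval, if_pos he,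
              if_neg (by rw [Nat.even_iff]; simp; omega :
              ¬ Even ((⟨(i:ℕ)-1, lt_of_le_of_lt (Nat.sub_le _ _) i.isLt⟩ : Fin (2*N+1)) : ℕ)),
              if_neg (by rw [Nat.even_iff]; simp; omega :
              ¬ Even ((⟨(i:ℕ)+1, by have := i.isLt; omega⟩ : Fin (2*N+1)) : ℕ))]
            simp only
            obtain ⟨m, hm⟩ : ∃ m, (i:ℕ)/2 = m + 1 := ⟨(i:ℕ)/2 - 1, by omega⟩
            rw [show ((i:ℕ)-1)/2 = (i:ℕ)/2 - 1 by omega, show ((i:ℕ)+1)/2 = (i:ℕ)/2 by omega,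
              hm, show m+1-1 = m by omega, show m+1+1 = m+2 by rfl]
            field_simp
            first
              | linear_combination (μ - μm) * keym m
              | linear_combination 4 * keym m
              | linear_combination keym m
              | linear_combination 2 * keym m
              | linear_combination (-4 : ℝ) * keym m
              | linear_combination 4 * (μ - μm) * keym m
              | linear_combination (-(μ - μm)) * keym m
              | linear_combination (-4 : ℝ) * (μ - μm) * keym m
      · -- odd rows
        have ho' : (i:ℕ) % 2 = 1 := Nat.odd_iff.mp ho
        have hne : ¬ Even (i:ℕ) := by rw [Nat.even_iff]; omega
        have hp : 0 < (i:ℕ) := by omega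
        have hq : (i:ℕ)+1 < 2*N+1 := by have := i.isLt; omega
        rw [dif_pos hp, dif_pos hq, hdiag, if_neg hne]
        rw [hsub i ⟨(i:ℕ)-1, lt_of_le_of_lt (Nat.sub_le _ _) i.isLt⟩ (by simp; omega),
          hsup i ⟨(i:ℕ)+1, hq⟩ (by simp)]
        rw [if_pos (by rw [Nat.even_iff]; simp; omega :
          Even ((⟨(i:ℕ)-1, lt_of_le_of_lt (Nat.sub_le _ _) i.isLt⟩ : Fin (2*N+1)) : ℕ)),
          if_neg hne]
        rw [hwval, hwval, hwval]
        rw [if_pos (by rw [Nat.even_iff]; simp; omega :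
          Even ((⟨(i:ℕ)-1, lt_of_le_of_lt (Nat.sub_le _ _) i.isLt⟩ : Fin (2*N+1)) : ℕ)),
          if_pos (by rw [Nat.even_iff]; simp; omega :
          Even ((⟨(i:ℕ)+1, hq⟩ : Fin (2*N+1)) : ℕ)),
          if_neg hne]
        simp only
        rw [show ((i:ℕ)-1)/2 = (i:ℕ)/2 by omega, show ((i:ℕ)+1)/2 = (i:ℕ)/2 + 1 by omega]
        field_simp
        ring

set_option maxHeartbeats 1000000 in
/-- SSH model with staggered chemical potential: diagonal entries `μ⁺` on even (0-based)
sites and `μ⁻` on odd sites, off-diagonal couplings alternating `t⁺ = (1+δ)/2`,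
`t⁻ = (1−δ)/2` starting with `t⁺`.  Its spectrum is exactly
`{μ⁺} ∪ {(μ⁺+μ⁻ ± √((μ⁺−μ⁻)² + 2(1+δ²) + 2(1−δ²)cos(kπ/(N+1))))/2 : k = 1,…,N}`. -/
theorem ssh_chemical_potential_spectrum (N : ℕ) (hN : 1 ≤ N)
    (δ μp μm : ℝ) (hδ1 : -1 < δ) (hδ2 : δ < 1)
    (H : Matrix (Fin (2 * N + 1)) (Fin (2 * N + 1)) ℝ)
    (hH : ∀ i j : Fin (2 * N + 1), H i j =
      if i = j then (if Even (i : ℕ) then μp else μm)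
      else if (i : ℕ) + 1 = (j : ℕ) then (if Even (i : ℕ) then (1 + δ) / 2 else (1 - δ) / 2)
      else if (j : ℕ) + 1 = (i : ℕ) then (if Even (j : ℕ) then (1 + δ) / 2 else (1 - δ) / 2)
      else 0) :
    ∀ μ : ℝ, (∃ v : Fin (2 * N + 1) → ℝ, v ≠ 0 ∧ H.mulVec v = μ • v) ↔
      (μ = μp ∨ ∃ k : ℕ, 1 ≤ k ∧ k ≤ N ∧
        (μ = (μp + μm + Real.sqrt ((μp - μm) ^ 2 + 2 * (1 + δ ^ 2)
              + 2 * (1 - δ ^ 2) * Real.cos (k * π / (N + 1)))) / 2 ∨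
         μ = (μp + μm - Real.sqrt ((μp - μm) ^ 2 + 2 * (1 + δ ^ 2)
              + 2 * (1 - δ ^ 2) * Real.cos (k * π / (N + 1)))) / 2)) := by
  intro μ
  constructor
  · rintro ⟨v, hv0, hveq⟩
    by_contra hcon
    push_neg at hcon
    obtain ⟨hμp, hk⟩ := hcon
    -- basic facts about the candidate eigenvalues
    set sq : ℕ → ℝ := fun k => Real.sqrt ((μp - μm) ^ 2 + 2 * (1 + δ ^ 2)
      + 2 * (1 - δ ^ 2) * Real.cos (k * π / (N + 1))) with hsq
    set xp : ℕ → ℝ := fun k => (μp + μm + sq k) / 2 with hxp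
    set xm : ℕ → ℝ := fun k => (μp + μm - sq k) / 2 with hxm
    have hd2 : (0:ℝ) < 1 - δ^2 := by nlinarith
    have hθmem : ∀ k : ℕ, 1 ≤ k → k ≤ N →
        0 < (k:ℝ) * π / ((N:ℝ) + 1) ∧ (k:ℝ) * π / ((N:ℝ) + 1) < π := by
      intro k h1 h2
      have hk0 : (0:ℝ) < (k:ℝ) := by exact_mod_cast Nat.lt_of_lt_of_le Nat.zero_lt_one h1
      constructor
      · apply div_pos (mul_pos hk0 Real.pi_pos); positivity
      · rw [div_lt_iff₀ (by positivity)]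
        have : (k:ℝ) < (N:ℝ) + 1 := by exact_mod_cast Nat.lt_succ_of_le h2
        nlinarith [Real.pi_pos]
    have hcosgt : ∀ k : ℕ, 1 ≤ k → k ≤ N → -1 < Real.cos ((k:ℝ) * π / ((N:ℝ) + 1)) := by
      intro k h1 h2
      obtain ⟨ha, hb⟩ := hθmem k h1 h2
      have := Real.cos_lt_cos_of_nonneg_of_le_pi (le_of_lt ha) le_rfl hb
      rw [Real.cos_pi] at this; linarith
    have hR0 : ∀ k : ℕ, 1 ≤ k → k ≤ N → 0 ≤ (μp - μm) ^ 2 + 2 * (1 + δ ^ 2)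
        + 2 * (1 - δ ^ 2) * Real.cos ((k:ℝ) * π / ((N:ℝ) + 1)) := by
      intro k h1 h2
      nlinarith [mul_pos hd2 (by linarith [hcosgt k h1 h2] :
        (0:ℝ) < Real.cos ((k:ℝ) * π / ((N:ℝ) + 1)) + 1), sq_nonneg (μp - μm)]
    have hsq2 : ∀ k : ℕ, 1 ≤ k → k ≤ N → (μp - μm)^2 < (sq k)^2 := by
      intro k h1 h2
      rw [hsq]
      simp only
      rw [Real.sq_sqrt (hR0 k h1 h2)]
      nlinarith [mul_pos hd2 (by linarith [hcosgt k h1 h2] :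
        (0:ℝ) < Real.cos ((k:ℝ) * π / ((N:ℝ) + 1)) + 1)]
    have hsq0 : ∀ k : ℕ, 0 ≤ sq k := fun k => Real.sqrt_nonneg _
    have hxpgt : ∀ k : ℕ, 1 ≤ k → k ≤ N → μp < xp k := by
      intro k h1 h2
      have := hsq2 k h1 h2
      have := hsq0 k
      rw [hxp]
      simp only
      nlinarith
    have hxmlt : ∀ k : ℕ, 1 ≤ k → k ≤ N → xm k < μp := by
      intro k h1 h2
      have := hsq2 k h1 h2
      have := hsq0 k
      rw [hxm]
      simp only
      nlinarith
    have hmono : ∀ j k : ℕ, 1 ≤ j → j ≤ N → 1 ≤ k → k ≤ N → j < k → sq k < sq j := by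
      intro j k hj1 hj2 hk1 hk2 hjk
      have hcos : Real.cos ((k:ℝ) * π / ((N:ℝ) + 1)) < Real.cos ((j:ℝ) * π / ((N:ℝ) + 1)) := by
        apply Real.cos_lt_cos_of_nonneg_of_le_pi (le_of_lt (hθmem j hj1 hj2).1)
          (le_of_lt (hθmem k hk1 hk2).2)
        have hlt : (j:ℝ) < (k:ℝ) := by exact_mod_cast hjk
        have hpos : (0:ℝ) < π / ((N:ℝ)+1) := by positivity
        rw [div_lt_div_iff₀ (by positivity) (by positivity)]
        have hppp := mul_pos (mul_pos (sub_pos.mpr hlt) Real.pi_pos)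
          (show (0:ℝ) < (N:ℝ)+1 by positivity)
        nlinarith [hppp]
      rw [hsq]
      simp only
      apply Real.sqrt_lt_sqrt (hR0 k hk1 hk2)
      nlinarith
    have hsqinj : ∀ j k : ℕ, 1 ≤ j → j ≤ N → 1 ≤ k → k ≤ N → sq j = sq k → j = k := by
      intro j k hj1 hj2 hk1 hk2 hjk
      by_contra hne
      rcases Nat.lt_or_ge j k with h | h
      · have := hmono j k hj1 hj2 hk1 hk2 h; linarith
      · have : k < j := by omega
        have := hmono k j hk1 hk2 hj1 hj2 this; linarith
    -- the eigenvalue list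
    set e : Fin (2*N+2) → ℝ := fun i =>
      if (i:ℕ) = 0 then μ else if (i:ℕ) = 1 then μp
      else if (i:ℕ) % 2 = 0 then xp ((i:ℕ)/2) else xm ((i:ℕ)/2) with he
    have hshape : ∀ i : Fin (2*N+2), ((i:ℕ) = 0 ∧ e i = μ) ∨ ((i:ℕ) = 1 ∧ e i = μp)
        ∨ ∃ k : ℕ, 1 ≤ k ∧ k ≤ N ∧ (((i:ℕ) = 2*k ∧ e i = xp k) ∨ ((i:ℕ) = 2*k+1 ∧ e i = xm k)) := by
      intro i
      rw [he]
      simp only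
      by_cases h0 : (i:ℕ) = 0
      · left; rw [if_pos h0]; exact ⟨h0, rfl⟩
      · right
        by_cases h1 : (i:ℕ) = 1
        · left; rw [if_neg h0, if_pos h1]; exact ⟨h1, rfl⟩
        · right
          have hlt := i.isLt
          by_cases h2 : (i:ℕ) % 2 = 0
          · refine ⟨(i:ℕ)/2, by omega, by omega, Or.inl ⟨by omega, ?_⟩⟩
            rw [if_neg h0, if_neg h1, if_pos h2]
          · refine ⟨(i:ℕ)/2, by omega, by omega, Or.inr ⟨by omega, ?_⟩⟩
            rw [if_neg h0, if_neg h1, if_neg h2]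
    have heig : ∀ i : Fin (2*N+2), ∃ w : Fin (2*N+1) → ℝ, w ≠ 0 ∧ H.mulVec w = (e i) • w := by
      intro i
      rcases hshape i with ⟨_, hei⟩ | ⟨_, hei⟩ | ⟨k, hk1, hk2, ⟨_, hei⟩ | ⟨_, hei⟩⟩
      · rw [hei]; exact ⟨v, hv0, hveq⟩
      · rw [hei]
        exact ssh_construct N hN δ μp μm hδ1 hδ2 H hH μp (Or.inl rfl)
      · rw [hei, hxp]
        exact ssh_construct N hN δ μp μm hδ1 hδ2 H hH _
          (Or.inr ⟨k, hk1, hk2, Or.inl rfl⟩)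
      · rw [hei, hxm]
        exact ssh_construct N hN δ μp μm hδ1 hδ2 H hH _
          (Or.inr ⟨k, hk1, hk2, Or.inr rfl⟩)
    have hμne : ∀ k : ℕ, 1 ≤ k → k ≤ N → μ ≠ xp k ∧ μ ≠ xm k := by
      intro k h1 h2
      have := hk k h1 h2
      rw [hxp, hxm]
      exact this
    have hinj : Function.Injective e := by
      intro i1 i2 h12
      have hfe : (i1:ℕ) = (i2:ℕ) → i1 = i2 := fun h => Fin.ext h
      rcases hshape i1 with ⟨hv1, he1⟩ | ⟨hv1, he1⟩ | ⟨k1, hk11, hk12, ⟨hv1, he1⟩ | ⟨hv1, he1⟩⟩ <;>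
        rcases hshape i2 with ⟨hv2, he2⟩ | ⟨hv2, he2⟩ | ⟨k2, hk21, hk22, ⟨hv2, he2⟩ | ⟨hv2, he2⟩⟩ <;>
        rw [he1, he2] at h12
      · exact hfe (by omega)
      · exact absurd h12 hμp
      · exact absurd h12 (hμne k2 hk21 hk22).1
      · exact absurd h12 (hμne k2 hk21 hk22).2
      · exact absurd h12.symm hμp
      · exact hfe (by omega)
      · exact absurd h12 (ne_of_lt (hxpgt k2 hk21 hk22))
      · exact absurd h12.symm (ne_of_lt (hxmlt k2 hk21 hk22))
      · exact absurd h12.symm (hμne k1 hk11 hk12).1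
      · exact absurd h12.symm (ne_of_lt (hxpgt k1 hk11 hk12))
      · -- xp k1 = xp k2
        have : sq k1 = sq k2 := by
          rw [hxp] at h12; simp only at h12; linarith
        have := hsqinj k1 k2 hk11 hk12 hk21 hk22 this
        exact hfe (by omega)
      · -- xp k1 = xm k2
        exfalso
        have h1 := hxpgt k1 hk11 hk12
        have h2 := hxmlt k2 hk21 hk22
        linarith
      · exact absurd h12.symm (hμne k1 hk11 hk12).2
      · exact absurd h12 (ne_of_lt (hxmlt k1 hk11 hk12))
      · exfalso
        have h1 := hxmlt k1 hk11 hk12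
        have h2 := hxpgt k2 hk21 hk22
        linarith
      · have : sq k1 = sq k2 := by
          rw [hxm] at h12; simp only at h12; linarith
        have := hsqinj k1 k2 hk11 hk12 hk21 hk22 this
        exact hfe (by omega)
    -- linear independence gives the contradiction
    choose V hV0 hVeq using heig
    set f : Module.End ℝ (Fin (2*N+1) → ℝ) := Matrix.mulVecLin H with hf
    have hasEig : ∀ i : Fin (2*N+2), f.HasEigenvector (e i) (V i) := by
      intro i
      rw [Module.End.hasEigenvector_iff, Module.End.mem_eigenspace_iff]
      refine ⟨?_, hV0 i⟩
      show Matrix.mulVecLin H (V i) = (e i) • (V i)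
      rw [Matrix.mulVecLin_apply]
      exact hVeq i
    have hli := f.eigenvectors_linearIndependent' e hinj V hasEig
    have hcard := hli.fintype_card_le_finrank
    rw [Module.finrank_fintype_fun_eq_card] at hcard
    simp [Fintype.card_fin] at hcard
    all_goals omega
  · intro h
    exact ssh_construct N hN δ μp μm hδ1 hδ2 H hH μ h
end

section
/- Under the hypotheses of the general doubling construction (symmetric recurrence for R_n, constraints ε√(A_n C_{n+1}) = τ_2 t_n^− t_{n+1}^+ and A_n+C_n+τ_0 = −τ_2((t_n^+)²+(t_n^−)²)), define V_n(x) = t_n^+ R_n(x) + t_{n−1}^− R_{n−1}(x). Then V_n(τ_0) t_n^+ + V_{n+1}(τ_0) t_n^− = 0 for all 0 ≤ n ≤ N−1; equivalently t_n^+/t_n^− = −V_{n+1}(τ_0)/V_n(τ_0). -/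
/-- In the general doubling construction, the polynomials
`V_n(x) = t_n^+ R_n(x) + t_{n−1}^− R_{n−1}(x)` satisfy
`V_n(τ₀) t_n^+ + V_{n+1}(τ₀) t_n^− = 0` for all `0 ≤ n ≤ N−1`. -/
theorem doubling_V_identity (N : ℕ) (hN : 1 ≤ N)
    (A C : ℤ → ℝ) (ε τ0 τ2 : ℝ) (hε : ε = 1 ∨ ε = -1) (hτ2 : τ2 ≠ 0)
    (R : ℤ → ℝ → ℝ)
    (hRm1 : ∀ x, R (-1) x = 0)
    (hR0 : ∀ x, R 0 x = 1)
    (hRrec : ∀ n : ℤ, 0 ≤ n → n ≤ (N : ℤ) - 1 → ∀ x : ℝ,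
      x * R n x = ε * Real.sqrt (A n * C (n + 1)) * R (n + 1) x
        - (A n + C n) * R n x + ε * Real.sqrt (A (n - 1) * C n) * R (n - 1) x)
    (tp tm : ℤ → ℝ)
    (htp0 : ∀ n : ℤ, 0 ≤ n → n ≤ (N : ℤ) - 1 → tp n ≠ 0)
    (htm0 : ∀ n : ℤ, 0 ≤ n → n ≤ (N : ℤ) - 1 → tm n ≠ 0)
    (htmm1 : tm (-1) = 0)
    (hcons1 : ∀ n : ℤ, 0 ≤ n → n ≤ (N : ℤ) - 1 →
      ε * Real.sqrt (A n * C (n + 1)) = τ2 * tm n * tp (n + 1))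
    (hcons2 : ∀ n : ℤ, 0 ≤ n → n ≤ (N : ℤ) - 1 →
      A n + C n + τ0 = -τ2 * ((tp n) ^ 2 + (tm n) ^ 2))
    (V : ℤ → ℝ → ℝ)
    (hV : ∀ (n : ℤ) (x : ℝ), V n x = tp n * R n x + tm (n - 1) * R (n - 1) x) :
    ∀ n : ℤ, 0 ≤ n → n ≤ (N : ℤ) - 1 → V n τ0 * tp n + V (n + 1) τ0 * tm n = 0 := by
  intro n hn hn'
  have hrec := hRrec n hn hn' τ0
  have h1 := hcons1 n hn hn'
  have h2 := hcons2 n hn hn'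
  have hlast : ε * Real.sqrt (A (n - 1) * C n) * R (n - 1) τ0
      = τ2 * tm (n - 1) * tp n * R (n - 1) τ0 := by
    rcases eq_or_lt_of_le hn with h | h
    · have hn0 : n = 0 := h.symm
      subst hn0
      simp [hRm1]
    · have h0 : (0:ℤ) ≤ n - 1 := by omega
      have h1' := hcons1 (n - 1) h0 (by omega)
      rw [sub_add_cancel] at h1'
      rw [h1']
  rw [h1, hlast] at hrec
  have hmain : τ2 * (V n τ0 * tp n + V (n + 1) τ0 * tm n) = 0 := by
    rw [hV, hV, add_sub_cancel_right]
    linear_combination -hrec + R n τ0 * h2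
  rcases mul_eq_zero.mp hmain with h | h
  · exact absurd h hτ2
  · exact h
end

section
/- Under the hypotheses of the general doubling construction, with V_n(x) = t_n^+ R_n(x) + t_{n−1}^− R_{n−1}(x) and π_x = τ_2 x² + τ_0, the odd polynomials satisfy Q_{2n+1}(x) = (τ_2 t_n^− x/(π_x − τ_0)) (V_{n+1}(π_x) + (t_n^+/t_n^−) V_n(π_x)) for all x ≠ 0. -/
/-!
Write `y = π x`. Substituting the two constraints into the recurrence for `R_n` at `y` regroups it as
`(y - τ₀) R_n(y) = τ₂ (t_n^− V_{n+1}(y) + t_n^+ V_n(y))`. Since `y - τ₀ = τ₂ x²` is nonzero for `x ≠ 0`,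
dividing by it and multiplying by `x` gives the formula for `Q_{2n+1}(x) = x R_n(y)`.
-/

section DoublingRecurrence

variable {N : ℕ} {A C : ℤ → ℝ} {ε τ0 τ2 : ℝ} {R : ℤ → ℝ → ℝ} {tp tm : ℤ → ℝ}

lemma recurrence_lower_term_eq (hRm1 : ∀ x, R (-1) x = 0)
    (hcons1 : ∀ n : ℤ, 0 ≤ n → n ≤ (N : ℤ) - 1 →
      ε * Real.sqrt (A n * C (n + 1)) = τ2 * tm n * tp (n + 1))
    {n : ℤ} (hn0 : 0 ≤ n) (hn1 : n ≤ (N : ℤ) - 1) (y : ℝ) :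
    ε * Real.sqrt (A (n - 1) * C n) * R (n - 1) y = τ2 * tm (n - 1) * tp n * R (n - 1) y := by
  rcases hn0.eq_or_lt with rfl | hpos
  · simp [hRm1]
  · have h := hcons1 (n - 1) (by omega) (by omega)
    rw [sub_add_cancel] at h
    rw [h]

lemma sub_mul_eq_of_recurrence (hRm1 : ∀ x, R (-1) x = 0)
    (hRrec : ∀ n : ℤ, 0 ≤ n → n ≤ (N : ℤ) - 1 → ∀ x : ℝ,
      x * R n x = ε * Real.sqrt (A n * C (n + 1)) * R (n + 1) x
        - (A n + C n) * R n x + ε * Real.sqrt (A (n - 1) * C n) * R (n - 1) x)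
    (hcons1 : ∀ n : ℤ, 0 ≤ n → n ≤ (N : ℤ) - 1 →
      ε * Real.sqrt (A n * C (n + 1)) = τ2 * tm n * tp (n + 1))
    (hcons2 : ∀ n : ℤ, 0 ≤ n → n ≤ (N : ℤ) - 1 →
      A n + C n + τ0 = -τ2 * ((tp n) ^ 2 + (tm n) ^ 2))
    {n : ℤ} (hn0 : 0 ≤ n) (hn1 : n ≤ (N : ℤ) - 1) (y : ℝ) :
    (y - τ0) * R n y = τ2 * (tm n * (tp (n + 1) * R (n + 1) y + tm n * R n y)
      + tp n * (tp n * R n y + tm (n - 1) * R (n - 1) y)) := by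
  have hrec := hRrec n hn0 hn1 y
  rw [hcons1 n hn0 hn1, recurrence_lower_term_eq hRm1 hcons1 hn0 hn1 y] at hrec
  linear_combination hrec - R n y * hcons2 n hn0 hn1

end DoublingRecurrence

theorem doubling_Qodd_V_general (N : ℕ)
    (A C : ℤ → ℝ) (ε τ0 τ2 : ℝ) (hτ2 : τ2 ≠ 0)
    (R : ℤ → ℝ → ℝ)
    (hRm1 : ∀ x, R (-1) x = 0)
    (hRrec : ∀ n : ℤ, 0 ≤ n → n ≤ (N : ℤ) - 1 → ∀ x : ℝ,
      x * R n x = ε * Real.sqrt (A n * C (n + 1)) * R (n + 1) x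
        - (A n + C n) * R n x + ε * Real.sqrt (A (n - 1) * C n) * R (n - 1) x)
    (tp tm : ℤ → ℝ)
    (htm0 : ∀ n : ℤ, 0 ≤ n → n ≤ (N : ℤ) - 1 → tm n ≠ 0)
    (hcons1 : ∀ n : ℤ, 0 ≤ n → n ≤ (N : ℤ) - 1 →
      ε * Real.sqrt (A n * C (n + 1)) = τ2 * tm n * tp (n + 1))
    (hcons2 : ∀ n : ℤ, 0 ≤ n → n ≤ (N : ℤ) - 1 →
      A n + C n + τ0 = -τ2 * ((tp n) ^ 2 + (tm n) ^ 2))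
    (π : ℝ → ℝ) (hπ : ∀ x, π x = τ2 * x ^ 2 + τ0)
    (V : ℤ → ℝ → ℝ)
    (hV : ∀ (n : ℤ) (x : ℝ), V n x = tp n * R n x + tm (n - 1) * R (n - 1) x)
    (Qo : ℤ → ℝ → ℝ)
    (hQo : ∀ (n : ℤ) (x : ℝ), Qo n x = x * R n (π x)) :
    ∀ n : ℤ, 0 ≤ n → n ≤ (N : ℤ) - 1 → ∀ x : ℝ, x ≠ 0 →
      Qo n x = τ2 * tm n * x / (π x - τ0) * (V (n + 1) (π x) + tp n / tm n * V n (π x)) := by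
  intro n hn0 hn1 x hx
  have key := sub_mul_eq_of_recurrence hRm1 hRrec hcons1 hcons2 hn0 hn1 (π x)
  have hgap : π x - τ0 = τ2 * x ^ 2 := by rw [hπ]; ring
  have htm := htm0 n hn0 hn1
  rw [hQo, hV, hV, add_sub_cancel_right, hgap]
  rw [hgap, mul_assoc] at key
  have hR := mul_left_cancel₀ hτ2 key
  field_simp
  linear_combination hR

/-- In the general doubling construction, the odd polynomials `Q_{2n+1}(x) = x R_n(π_x)`
satisfy `Q_{2n+1}(x) = (τ₂ t_n^− x/(π_x − τ₀)) (V_{n+1}(π_x) + (t_n^+/t_n^−) V_n(π_x))`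
for all `x ≠ 0`. -/
theorem doubling_Qodd_V (N : ℕ) (hN : 1 ≤ N)
    (A C : ℤ → ℝ) (ε τ0 τ2 : ℝ) (hε : ε = 1 ∨ ε = -1) (hτ2 : τ2 ≠ 0)
    (R : ℤ → ℝ → ℝ)
    (hRm1 : ∀ x, R (-1) x = 0)
    (hR0 : ∀ x, R 0 x = 1)
    (hRrec : ∀ n : ℤ, 0 ≤ n → n ≤ (N : ℤ) - 1 → ∀ x : ℝ,
      x * R n x = ε * Real.sqrt (A n * C (n + 1)) * R (n + 1) x
        - (A n + C n) * R n x + ε * Real.sqrt (A (n - 1) * C n) * R (n - 1) x)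
    (tp tm : ℤ → ℝ)
    (htp0 : ∀ n : ℤ, 0 ≤ n → n ≤ (N : ℤ) - 1 → tp n ≠ 0)
    (htm0 : ∀ n : ℤ, 0 ≤ n → n ≤ (N : ℤ) - 1 → tm n ≠ 0)
    (htmm1 : tm (-1) = 0)
    (hcons1 : ∀ n : ℤ, 0 ≤ n → n ≤ (N : ℤ) - 1 →
      ε * Real.sqrt (A n * C (n + 1)) = τ2 * tm n * tp (n + 1))
    (hcons2 : ∀ n : ℤ, 0 ≤ n → n ≤ (N : ℤ) - 1 →
      A n + C n + τ0 = -τ2 * ((tp n) ^ 2 + (tm n) ^ 2))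
    (π : ℝ → ℝ) (hπ : ∀ x, π x = τ2 * x ^ 2 + τ0)
    (V : ℤ → ℝ → ℝ)
    (hV : ∀ (n : ℤ) (x : ℝ), V n x = tp n * R n x + tm (n - 1) * R (n - 1) x)
    (Qo : ℤ → ℝ → ℝ)
    (hQo : ∀ (n : ℤ) (x : ℝ), Qo n x = x * R n (π x)) :
    ∀ n : ℤ, 0 ≤ n → n ≤ (N : ℤ) - 1 → ∀ x : ℝ, x ≠ 0 →
      Qo n x = τ2 * tm n * x / (π x - τ0) * (V (n + 1) (π x) + tp n / tm n * V n (π x)) :=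
  doubling_Qodd_V_general N A C ε τ0 τ2 hτ2 R hRm1 hRrec tp tm htm0 hcons1 hcons2 π hπ V hV Qo hQo
end

section
/- Let 0 < p < 1 and N ≥ 1, δ = 2p−1, u_i = √((N−i)/2). The (2N+1)×(2N+1) symmetric tridiagonal matrix H with zero diagonal whose off-diagonal entries are, in order, u_0√(1+δ), u_{N−1}√(1−δ), u_1√(1+δ), u_{N−2}√(1−δ), …, u_{N−1}√(1+δ), u_0√(1−δ) (i.e. t_n^+ = √(p(N−n)) between sites 2n and 2n+1, t_n^− = √((1−p)(n+1)) between sites 2n+1 and 2n+2) has eigenvalues exactly 0 and ±√(k+1) for k = 0, 1, …, N−1. -/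
open Finset

namespace KSSH

noncomputable section

/-- Falling factorial `x(x-1)...(x-j+1)`. -/
def ff (x : ℝ) (j : ℕ) : ℝ := ∏ i ∈ Finset.range j, (x - (i : ℝ))

lemma ff_zero (x : ℝ) : ff x 0 = 1 := by simp [ff]

lemma ff_succ (x : ℝ) (j : ℕ) : ff x (j + 1) = ff x j * (x - (j : ℝ)) :=
  Finset.prod_range_succ _ _

lemma x_mul_ff (x : ℝ) (j : ℕ) : x * ff x j = ff x (j + 1) + (j : ℝ) * ff x j := by
  rw [ff_succ]; ring

lemma ff_nat (m j : ℕ) : ff (m : ℝ) j = (m.descFactorial j : ℝ) := by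
  induction j with
  | zero => simp [ff]
  | succ j ih =>
    rw [ff_succ, ih, Nat.descFactorial_succ]
    rcases le_or_gt j m with h | h
    · push_cast [Nat.cast_sub h]
      ring
    · have h0 : m.descFactorial j = 0 := Nat.descFactorial_eq_zero_iff_lt.2 h
      have h1 : m - j = 0 := by omega
      rw [h0, h1]
      simp

/-- The pair `(E_n, F_n)` of transfer polynomials evaluated at `x`. -/
def EFa (N : ℕ) (p x : ℝ) : ℕ → ℝ × ℝ
  | 0 => (1, 1)
  | n + 1 =>
      (x * (EFa N p x n).1 - p * ((N : ℝ) - (n : ℝ)) * (EFa N p x n).2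
        - (1 - p) * ((n : ℝ) + 1) * (EFa N p x n).1,
       x * (EFa N p x n).1 - p * ((N : ℝ) - (n : ℝ)) * (EFa N p x n).2)

def Ek (N : ℕ) (p x : ℝ) (n : ℕ) : ℝ := (EFa N p x n).1

def Fk (N : ℕ) (p x : ℝ) (n : ℕ) : ℝ := (EFa N p x n).2

lemma Ek_zero (N : ℕ) (p x : ℝ) : Ek N p x 0 = 1 := rfl
lemma Fk_zero (N : ℕ) (p x : ℝ) : Fk N p x 0 = 1 := rfl

lemma Fk_succ (N : ℕ) (p x : ℝ) (n : ℕ) :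
    Fk N p x (n + 1) = x * Ek N p x n - p * ((N : ℝ) - (n : ℝ)) * Fk N p x n := rfl

lemma Ek_succ (N : ℕ) (p x : ℝ) (n : ℕ) :
    Ek N p x (n + 1) = Fk N p x (n + 1) - (1 - p) * ((n : ℝ) + 1) * Ek N p x n := rfl

/-- Truncated negative-binomial series. -/
def T' (p : ℝ) (m s : ℕ) : ℝ := ∑ i ∈ Finset.range (m + 1), ((s + i).choose i : ℝ) * p ^ i

lemma T'_zero (p : ℝ) (s : ℕ) : T' p 0 s = 1 := by simp [T']

lemma T'_succ (p : ℝ) (m s : ℕ) :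
    T' p (m + 1) s = T' p m s + ((s + (m + 1)).choose (m + 1) : ℝ) * p ^ (m + 1) :=
  Finset.sum_range_succ _ _

def cF (N : ℕ) (p : ℝ) (n j : ℕ) : ℝ :=
  (-1 : ℝ) ^ (n - j) * (n.choose j : ℝ) * ((N - j).descFactorial (n - j) : ℝ) * p ^ (n - j)

def cE (N : ℕ) (p : ℝ) (n j : ℕ) : ℝ :=
  if n < j then 0
  else (-1 : ℝ) ^ (n - j) * (n.descFactorial (n - j) : ℝ) * T' p (n - j) (N - n - 1)

def cZ (N : ℕ) (j : ℕ) : ℝ :=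
  if N < j then 0 else (-1 : ℝ) ^ (N - j) * (N.descFactorial (N - j) : ℝ)

lemma T'_rec (p : ℝ) (m s : ℕ) :
    T' p (m + 1) s = ((s + m + 2).choose (m + 1) : ℝ) * p ^ (m + 1) + (1 - p) * T' p m (s + 1) := by
  induction m with
  | zero =>
    simp [T', Finset.sum_range_succ, Nat.choose_one_right]
    push_cast
    ring
  | succ m ih =>
    have h1 : T' p (m + 2) s = T' p (m + 1) s + ((s + (m + 2)).choose (m + 2) : ℝ) * p ^ (m + 2) :=
      T'_succ p (m + 1) s
    have h2 : T' p (m + 1) (s + 1) = T' p m (s + 1)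
        + (((s + 1) + (m + 1)).choose (m + 1) : ℝ) * p ^ (m + 1) := T'_succ p m (s + 1)
    have hpas : ((s + m + 3).choose (m + 2) : ℝ)
        = ((s + m + 2).choose (m + 1) : ℝ) + ((s + m + 2).choose (m + 2) : ℝ) := by
      have := Nat.choose_succ_succ (s + m + 2) (m + 1)
      exact_mod_cast congrArg (Nat.cast (R := ℝ)) this
    have e1 : s + (m + 2) = s + m + 2 := by ring
    have e2 : s + 1 + (m + 1) = s + m + 2 := by ring
    have e3 : s + (m + 1) + 2 = s + m + 3 := by ring
    rw [h1, ih, h2, e1, e2, e3, hpas]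
    ring

lemma key1R (i a c : ℕ) :
    (((i + 1 + a).choose i : ℕ) : ℝ) * (((c : ℝ) + 1) * ((a + c + 1).descFactorial a : ℝ))
      = ((i : ℝ) + 1) * (((i + 1 + a).descFactorial a : ℝ) * ((a + c + 1).choose (a + 1) : ℝ)) := by
  have h1 : ((a + c + 1).choose (a + 1) : ℝ) * ((a : ℝ) + 1)
      = ((a + c + 1).choose a : ℝ) * ((c : ℝ) + 1) := by
    have := Nat.choose_succ_right_eq (a + c + 1) a
    have h' : (a + c + 1) - a = c + 1 := by omega
    rw [h'] at this
    exact_mod_cast congrArg (Nat.cast (R := ℝ)) this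
  have h2 : ((i + 1 + a).choose (a + 1) : ℝ) * ((a : ℝ) + 1)
      = ((i + 1 + a).choose a : ℝ) * ((i : ℝ) + 1) := by
    have := Nat.choose_succ_right_eq (i + 1 + a) a
    have h' : (i + 1 + a) - a = i + 1 := by omega
    rw [h'] at this
    exact_mod_cast congrArg (Nat.cast (R := ℝ)) this
  have h3 : ((i + 1 + a).choose i : ℝ) = ((i + 1 + a).choose (a + 1) : ℝ) := by
    have := Nat.choose_symm (show a + 1 ≤ i + 1 + a by omega)
    have h' : (i + 1 + a) - (a + 1) = i := by omega
    rw [h'] at this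
    exact_mod_cast congrArg (Nat.cast (R := ℝ)) this
  have hd1 : ((a + c + 1).descFactorial a : ℝ) = (a.factorial : ℝ) * ((a + c + 1).choose a : ℝ) := by
    exact_mod_cast congrArg (Nat.cast (R := ℝ)) (Nat.descFactorial_eq_factorial_mul_choose _ _)
  have hd2 : ((i + 1 + a).descFactorial a : ℝ) = (a.factorial : ℝ) * ((i + 1 + a).choose a : ℝ) := by
    exact_mod_cast congrArg (Nat.cast (R := ℝ)) (Nat.descFactorial_eq_factorial_mul_choose _ _)
  have ha : ((a : ℝ) + 1) ≠ 0 := by positivity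
  apply mul_right_cancel₀ ha
  rw [h3, hd1, hd2]
  linear_combination (((c : ℝ) + 1) * (a.factorial : ℝ) * ((a + c + 1).choose a : ℝ)) * h2
    - (((i : ℝ) + 1) * (a.factorial : ℝ) * ((i + 1 + a).choose a : ℝ)) * h1

lemma key2R (j m s : ℕ) :
    (((j + m + 1).descFactorial (m + 1) : ℕ) : ℝ) * ((s + m + 2).choose (m + 1) : ℝ)
      = ((j + m + 1).choose j : ℝ) * ((s + m + 2).descFactorial (m + 1) : ℝ) := by
  have hd1 : ((j + m + 1).descFactorial (m + 1) : ℝ)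
      = ((m + 1).factorial : ℝ) * ((j + m + 1).choose (m + 1) : ℝ) := by
    exact_mod_cast congrArg (Nat.cast (R := ℝ)) (Nat.descFactorial_eq_factorial_mul_choose _ _)
  have hd2 : ((s + m + 2).descFactorial (m + 1) : ℝ)
      = ((m + 1).factorial : ℝ) * ((s + m + 2).choose (m + 1) : ℝ) := by
    exact_mod_cast congrArg (Nat.cast (R := ℝ)) (Nat.descFactorial_eq_factorial_mul_choose _ _)
  have h3 : ((j + m + 1).choose j : ℝ) = ((j + m + 1).choose (m + 1) : ℝ) := by
    have := Nat.choose_symm (show m + 1 ≤ j + m + 1 by omega)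
    have h' : (j + m + 1) - (m + 1) = j := by omega
    rw [h'] at this
    exact_mod_cast congrArg (Nat.cast (R := ℝ)) this
  rw [hd1, hd2, h3]
  ring

lemma cF_eq (N : ℕ) (p : ℝ) (n j : ℕ) (hn : n + 1 ≤ N) :
    cF N p (n + 1) j = (if j = 0 then 0 else cE N p n (j - 1)) + (j : ℝ) * cE N p n j
      - p * ((N : ℝ) - (n : ℝ)) * cF N p n j := by
  rcases Nat.eq_zero_or_pos j with rfl | hj
  · have hd : ((N.descFactorial (n + 1) : ℕ) : ℝ)
        = ((N : ℝ) - (n : ℝ)) * (N.descFactorial n : ℝ) := by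
      rw [Nat.descFactorial_succ]
      push_cast [Nat.cast_sub (show n ≤ N by omega)]
      ring
    simp only [cF, cE, Nat.sub_zero, Nat.choose_zero_right, Nat.cast_zero, Nat.cast_one,
      reduceIte, zero_mul, mul_zero, add_zero, zero_add]
    rw [hd, pow_succ, pow_succ]
    ring
  rcases le_or_gt j n with hjn | hjn
  · -- main case 1 ≤ j ≤ n
    obtain ⟨i, rfl⟩ : ∃ i, j = i + 1 := ⟨j - 1, by omega⟩
    obtain ⟨a, rfl⟩ : ∃ a, n = i + 1 + a := ⟨n - (i + 1), by omega⟩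
    obtain ⟨c, rfl⟩ : ∃ c, N = i + 1 + a + 1 + c := ⟨N - (i + 1 + a + 1), by omega⟩
    have g1 : ¬ (i + 1 + a < i + 1 - 1) := by omega
    have g2 : ¬ (i + 1 + a < i + 1) := by omega
    simp only [cF, cE, if_neg g1, if_neg g2, if_neg (by omega : ¬ (i + 1 = 0))]
    rw [show i + 1 + a + 1 - (i + 1) = a + 1 by omega,
      show i + 1 + a + 1 + c - (i + 1) = a + c + 1 by omega,
      show i + 1 - 1 = i by omega,
      show i + 1 + a - i = a + 1 by omega,
      show i + 1 + a + 1 + c - (i + 1 + a) - 1 = c by omega,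
      show i + 1 + a - (i + 1) = a by omega]
    have hT := T'_succ p a c
    rw [show c + (a + 1) = a + c + 1 by omega] at hT
    have hpas : (((i + 1 + a + 1).choose (i + 1) : ℕ) : ℝ)
        = ((i + 1 + a).choose i : ℝ) + ((i + 1 + a).choose (i + 1) : ℝ) := by
      exact_mod_cast congrArg (Nat.cast (R := ℝ)) (Nat.choose_succ_succ (i + 1 + a) i)
    have hdn : (((i + 1 + a).descFactorial (a + 1) : ℕ) : ℝ)
        = ((i : ℝ) + 1) * ((i + 1 + a).descFactorial a : ℝ) := by
      rw [Nat.descFactorial_succ, show i + 1 + a - a = i + 1 by omega]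
      push_cast; ring
    have hdN : (((a + c + 1).descFactorial (a + 1) : ℕ) : ℝ)
        = ((c : ℝ) + 1) * ((a + c + 1).descFactorial a : ℝ) := by
      rw [Nat.descFactorial_succ, show a + c + 1 - a = c + 1 by omega]
      push_cast; ring
    have hNr : ((i + 1 + a + 1 + c : ℕ) : ℝ) - ((i + 1 + a : ℕ) : ℝ) = (c : ℝ) + 1 := by
      push_cast; ring
    push_cast [hT, hpas, hdn, hdN, pow_succ]
    linear_combination (-(-1 : ℝ) ^ a * p ^ a * p) * key1R i a c
  rcases eq_or_lt_of_le (show n + 1 ≤ j by omega) with rfl | hj2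
  · -- j = n + 1
    simp only [cF, cE, Nat.sub_self, if_neg (by omega : ¬ (n + 1 = 0)),
      if_neg (by omega : ¬ (n < n + 1 - 1)), if_pos (by omega : n < n + 1),
      Nat.choose_self, Nat.choose_succ_self, show n + 1 - 1 = n by omega, Nat.sub_self]
    simp [T'_zero]
  · -- j ≥ n + 2
    have c1 : (n + 1).choose j = 0 := Nat.choose_eq_zero_of_lt (by omega)
    have c2 : n.choose j = 0 := Nat.choose_eq_zero_of_lt (by omega)
    simp only [cF, cE, c1, c2, if_neg (by omega : ¬ j = 0),
      if_pos (by omega : n < j - 1), if_pos (by omega : n < j)]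
    simp

lemma cE_eq (N : ℕ) (p : ℝ) (n j : ℕ) (hn : n + 2 ≤ N) :
    cE N p (n + 1) j = cF N p (n + 1) j - (1 - p) * ((n : ℝ) + 1) * cE N p n j := by
  rcases le_or_gt j n with hjn | hjn
  · -- main case j ≤ n
    obtain ⟨m, rfl⟩ : ∃ m, n = j + m := ⟨n - j, by omega⟩
    obtain ⟨s, rfl⟩ : ∃ s, N = j + m + 2 + s := ⟨N - (j + m + 2), by omega⟩
    have g1 : ¬ (j + m + 1 < j) := by omega
    have g2 : ¬ (j + m < j) := by omega
    simp only [cE, cF, if_neg g1, if_neg g2]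
    rw [show j + m + 1 - j = m + 1 by omega,
      show j + m + 2 + s - (j + m + 1) - 1 = s by omega,
      show j + m + 2 + s - j = s + m + 2 by omega,
      show j + m - j = m by omega,
      show j + m + 2 + s - (j + m) - 1 = s + 1 by omega]
    have hT := T'_rec p m s
    have hd : (((j + m + 1).descFactorial (m + 1) : ℕ) : ℝ)
        = ((j : ℝ) + (m : ℝ) + 1) * ((j + m).descFactorial m : ℝ) := by
      have := Nat.succ_descFactorial_succ (j + m) m
      rw [this]; push_cast; ring
    push_cast [hT, pow_succ]
    linear_combination ((-1 : ℝ) ^ m * -1 * (p ^ m * p)) * key2R j m s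
      + (((-1 : ℝ) ^ m * -1 * (T' p m (s + 1) * (1 - p))) * hd)
  rcases eq_or_lt_of_le (show n + 1 ≤ j by omega) with rfl | hj2
  · simp only [cE, cF, Nat.sub_self, if_neg (Nat.lt_irrefl _), if_pos (by omega : n < n + 1),
      Nat.choose_self, Nat.descFactorial_zero, T'_zero]
    simp
  · have c1 : (n + 1).choose j = 0 := Nat.choose_eq_zero_of_lt (by omega)
    simp only [cE, cF, c1, if_pos (by omega : n + 1 < j), if_pos (by omega : n < j)]
    simp

def SF (N : ℕ) (p x : ℝ) (n : ℕ) : ℝ := ∑ j ∈ Finset.range (N + 2), cF N p n j * ff x j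
def SE (N : ℕ) (p x : ℝ) (n : ℕ) : ℝ := ∑ j ∈ Finset.range (N + 2), cE N p n j * ff x j

lemma closed (N : ℕ) (p x : ℝ) :
    ∀ n, (n ≤ N → Fk N p x n = SF N p x n) ∧ (n < N → Ek N p x n = SE N p x n) := by
  intro n
  induction n with
  | zero =>
    constructor <;> intro hn
    · show (1 : ℝ) = _
      rw [SF, Finset.sum_eq_single 0]
      · simp [cF, ff_zero]
      · intro j _ hj
        have : (0 : ℕ).choose j = 0 := Nat.choose_eq_zero_of_lt (by omega)
        simp [cF, this]
      · intro h; exact absurd (Finset.mem_range.2 (by omega)) h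
    · show (1 : ℝ) = _
      rw [SE, Finset.sum_eq_single 0]
      · simp [cE, ff_zero, T'_zero]
      · intro j _ hj
        simp [cE, if_pos (by omega : 0 < j)]
      · intro h; exact absurd (Finset.mem_range.2 (by omega)) h
  | succ n ih =>
    have key : n + 1 ≤ N → Fk N p x (n + 1) = SF N p x (n + 1) := by
      intro hn
      have hshift : ∑ j ∈ Finset.range (N + 2),
          (if j = 0 then 0 else cE N p n (j - 1)) * ff x j
          = ∑ j ∈ Finset.range (N + 2), cE N p n j * ff x (j + 1) := by
        rw [Finset.sum_range_succ' (fun j => (if j = 0 then 0 else cE N p n (j - 1)) * ff x j)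
          (N + 1)]
        rw [Finset.sum_range_succ (fun j => cE N p n j * ff x (j + 1)) (N + 1)]
        have hz : cE N p n (N + 1) = 0 := by rw [cE, if_pos (by omega)]
        simp [hz]
      have hsum : SF N p x (n + 1)
          = x * SE N p x n - p * ((N : ℝ) - (n : ℝ)) * SF N p x n := by
        calc SF N p x (n + 1)
            = ∑ j ∈ Finset.range (N + 2),
                ((if j = 0 then 0 else cE N p n (j - 1)) * ff x j
                  + ((j : ℝ) * cE N p n j * ff x j)
                  - p * ((N : ℝ) - (n : ℝ)) * (cF N p n j * ff x j)) := by
              rw [SF]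
              refine Finset.sum_congr rfl fun j _ => ?_
              rw [cF_eq N p n j hn]; ring
          _ = x * SE N p x n - p * ((N : ℝ) - (n : ℝ)) * SF N p x n := by
              rw [Finset.sum_sub_distrib, Finset.sum_add_distrib, hshift]
              have h1 : (∑ j ∈ Finset.range (N + 2), cE N p n j * ff x (j + 1))
                  + ∑ j ∈ Finset.range (N + 2), (j : ℝ) * cE N p n j * ff x j
                  = x * SE N p x n := by
                rw [SE, Finset.mul_sum, ← Finset.sum_add_distrib]
                refine Finset.sum_congr rfl fun j _ => ?_
                linear_combination (-(cE N p n j)) * x_mul_ff x j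
              have h2 : (∑ j ∈ Finset.range (N + 2),
                    p * ((N : ℝ) - (n : ℝ)) * (cF N p n j * ff x j))
                  = p * ((N : ℝ) - (n : ℝ)) * SF N p x n := by
                rw [SF, Finset.mul_sum]
              rw [h1, h2]
      rw [Fk_succ, ih.1 (by omega), ih.2 (by omega), hsum]
    refine ⟨key, fun hn => ?_⟩
    rw [Ek_succ, key (by omega), ih.2 (by omega)]
    simp only [SE, SF, Finset.mul_sum]
    rw [← Finset.sum_sub_distrib]
    refine Finset.sum_congr rfl fun j _ => ?_
    linear_combination (-(ff x j)) * cE_eq N p n j (by omega)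


lemma cZ_eq (N : ℕ) (p : ℝ) (t : ℕ) (hN : N = t + 1) (j : ℕ) :
    cZ N j = cF N p (t + 1) j - (1 - p) * ((t : ℝ) + 1) * cE N p t j := by
  subst hN
  rcases le_or_gt j t with hjt | hjt
  · obtain ⟨m, rfl⟩ : ∃ m, t = j + m := ⟨t - j, by omega⟩
    have g1 : ¬ (j + m + 1 < j) := by omega
    have g2 : ¬ (j + m < j) := by omega
    simp only [cZ, cF, cE, if_neg g1, if_neg g2]
    rw [show j + m + 1 - j = m + 1 by omega, show j + m - j = m by omega,
      show j + m + 1 - (j + m) - 1 = 0 by omega]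
    have hc : ((j + m + 1).choose j : ℝ) * ((m + 1).factorial : ℝ)
        = ((j + m + 1).descFactorial (m + 1) : ℝ) := by
      have hsym : (j + m + 1).choose j = (j + m + 1).choose (m + 1) := by
        have := Nat.choose_symm (show m + 1 ≤ j + m + 1 by omega)
        rw [show j + m + 1 - (m + 1) = j by omega] at this
        exact this
      rw [hsym, Nat.descFactorial_eq_factorial_mul_choose]
      push_cast; ring
    have hd2 : ((j + m + 1).descFactorial (m + 1) : ℝ)
        = ((j : ℝ) + (m : ℝ) + 1) * ((j + m).descFactorial m : ℝ) := by
      have := Nat.succ_descFactorial_succ (j + m) m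
      rw [this]; push_cast; ring
    have hgeom : (1 - p) * T' p m 0 = 1 - p ^ (m + 1) := by
      have h1 : T' p m 0 = ∑ i ∈ Finset.range (m + 1), p ^ i := by
        rw [T']
        refine Finset.sum_congr rfl fun i _ => ?_
        simp
      have h2 := geom_sum_mul p (m + 1)
      rw [h1]
      linear_combination -h2
    rw [Nat.descFactorial_self]
    push_cast
    linear_combination ((-1 : ℝ) ^ m * p ^ (m + 1)) * hc
      + (((j : ℝ) + (m : ℝ) + 1) * (-1 : ℝ) ^ m * ((j + m).descFactorial m : ℝ)) * hgeom
      + ((-1 : ℝ) ^ m * (p ^ (m + 1) - 1)) * hd2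
  rcases eq_or_lt_of_le (show t + 1 ≤ j by omega) with rfl | hj2
  · simp only [cZ, cF, cE, Nat.sub_self, if_neg (Nat.lt_irrefl _),
      if_pos (by omega : t < t + 1), Nat.choose_self, Nat.descFactorial_zero]
    simp
  · have c1 : (t + 1).choose j = 0 := Nat.choose_eq_zero_of_lt (by omega)
    simp only [cZ, cF, cE, c1, if_pos (by omega : t + 1 < j), if_pos (by omega : t < j)]
    simp

lemma EkN (N : ℕ) (p x : ℝ) (hN : 1 ≤ N) :
    Ek N p x N = ∑ j ∈ Finset.range (N + 2), cZ N j * ff x j := by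
  obtain ⟨t, rfl⟩ : ∃ t, N = t + 1 := ⟨N - 1, by omega⟩
  rw [Ek_succ, (closed (t + 1) p x (t + 1)).1 (by omega), (closed (t + 1) p x t).2 (by omega)]
  simp only [SE, SF, Finset.mul_sum]
  rw [← Finset.sum_sub_distrib]
  refine Finset.sum_congr rfl fun j _ => ?_
  rw [cZ_eq (t + 1) p t rfl j]
  ring

lemma Ek_nat_zero (N : ℕ) (p : ℝ) (m : ℕ) (h1 : 1 ≤ m) (hm : m ≤ N) :
    Ek N p (m : ℝ) N = 0 := by
  have hN : 1 ≤ N := le_trans h1 hm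
  rw [EkN N p _ hN]
  have hpt : ∀ j ∈ Finset.range (N + 2), cZ N j * ff (m : ℝ) j
      = ((-1 : ℝ) ^ N * (N.factorial : ℝ)) * ((-1 : ℝ) ^ j * (m.choose j : ℝ)) := by
    intro j _
    rcases le_or_gt j N with hj | hj
    · rw [cZ, if_neg (by omega), ff_nat]
      have hdm : ((m.descFactorial j : ℕ) : ℝ) = (j.factorial : ℝ) * (m.choose j : ℝ) := by
        rw [Nat.descFactorial_eq_factorial_mul_choose]; push_cast; ring
      have hdN : (j.factorial : ℝ) * ((N.descFactorial (N - j) : ℕ) : ℝ) = (N.factorial : ℝ) := by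
        have := Nat.factorial_mul_descFactorial (show N - j ≤ N by omega)
        rw [show N - (N - j) = j by omega] at this
        exact_mod_cast congrArg (Nat.cast (R := ℝ)) this
      have hsg : (-1 : ℝ) ^ (N - j) * (-1 : ℝ) ^ j = (-1 : ℝ) ^ N := by
        rw [← pow_add]; congr 1; omega
      have hsq : (-1 : ℝ) ^ j * (-1 : ℝ) ^ j = (1 : ℝ) := by
        rw [← mul_pow]; norm_num
      have hsign : (-1 : ℝ) ^ (N - j) = (-1 : ℝ) ^ N * (-1 : ℝ) ^ j := by
        calc (-1 : ℝ) ^ (N - j) = (-1 : ℝ) ^ (N - j) * ((-1 : ℝ) ^ j * (-1 : ℝ) ^ j) := by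
              rw [hsq, mul_one]
          _ = ((-1 : ℝ) ^ (N - j) * (-1 : ℝ) ^ j) * (-1 : ℝ) ^ j := by ring
          _ = (-1 : ℝ) ^ N * (-1 : ℝ) ^ j := by rw [hsg]
      rw [hdm, hsign]
      linear_combination ((-1 : ℝ) ^ N * (-1 : ℝ) ^ j * (m.choose j : ℝ)) * hdN
    · rw [cZ, if_pos (by omega)]
      have : m.choose j = 0 := Nat.choose_eq_zero_of_lt (by omega)
      rw [this]
      simp
  rw [Finset.sum_congr rfl hpt, ← Finset.mul_sum]
  have halt : ∑ j ∈ Finset.range (N + 2), (-1 : ℝ) ^ j * (m.choose j : ℝ) = 0 := by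
    have hsub : ∑ j ∈ Finset.range (N + 2), (-1 : ℝ) ^ j * (m.choose j : ℝ)
        = ∑ j ∈ Finset.range (m + 1), (-1 : ℝ) ^ j * (m.choose j : ℝ) := by
      symm
      refine Finset.sum_subset (by intro a ha; simp at ha ⊢; omega) ?_
      intro j _ hj
      simp only [Finset.mem_range, not_lt] at hj
      rw [Nat.choose_eq_zero_of_lt (by omega)]
      simp
    rw [hsub]
    have := Int.alternating_sum_range_choose_of_ne (show m ≠ 0 by omega)
    exact_mod_cast congrArg (Int.cast (R := ℝ)) this
  rw [halt, mul_zero]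

def gsc (N : ℕ) (p : ℝ) : ℕ → ℝ
  | 0 => 1
  | n + 1 => gsc N p n * (Real.sqrt (p * ((N : ℝ) - (n : ℝ)))
      * Real.sqrt ((1 - p) * ((n : ℝ) + 1)))

def hsc (N : ℕ) (p : ℝ) (n : ℕ) : ℝ := gsc N p n * Real.sqrt (p * ((N : ℝ) - (n : ℝ)))

lemma sqrtp_pos {N : ℕ} {p : ℝ} (hp0 : 0 < p) {n : ℕ} (hn : n < N) :
    0 < Real.sqrt (p * ((N : ℝ) - (n : ℝ))) := by
  apply Real.sqrt_pos.2
  have : (n : ℝ) < (N : ℝ) := by exact_mod_cast hn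
  nlinarith

lemma sqrtq_pos {p : ℝ} (hp1 : p < 1) (n : ℕ) :
    0 < Real.sqrt ((1 - p) * ((n : ℝ) + 1)) := by
  apply Real.sqrt_pos.2
  have : (0:ℝ) ≤ (n : ℝ) := Nat.cast_nonneg n
  nlinarith

lemma gsc_pos {N : ℕ} {p : ℝ} (hp0 : 0 < p) (hp1 : p < 1) :
    ∀ n, n ≤ N → 0 < gsc N p n := by
  intro n
  induction n with
  | zero => intro _; norm_num [gsc]
  | succ n ih =>
    intro hn
    have h1 := ih (by omega)
    have h2 := sqrtp_pos hp0 (show n < N by omega) (p := p)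
    have h3 := sqrtq_pos hp1 n
    rw [gsc]
    positivity

lemma hsc_pos {N : ℕ} {p : ℝ} (hp0 : 0 < p) (hp1 : p < 1) {n : ℕ} (hn : n < N) :
    0 < hsc N p n := by
  have := gsc_pos hp0 hp1 (N := N) n (by omega)
  have := sqrtp_pos hp0 hn (p := p)
  rw [hsc]; positivity

lemma sum_if_single {M : ℕ} (f : Fin M → ℝ) (k : ℕ) :
    (∑ j : Fin M, if k = (j : ℕ) then f j else 0) = if hk : k < M then f ⟨k, hk⟩ else 0 := by
  split_ifs with hk
  · rw [Finset.sum_eq_single ⟨k, hk⟩]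
    · simp
    · intro j _ hj
      rw [if_neg]
      intro h
      exact hj (Fin.ext h.symm)
    · intro h; exact absurd (Finset.mem_univ _) h
  · apply Finset.sum_eq_zero
    intro j _
    rw [if_neg]
    intro h
    exact hk (h ▸ j.isLt)

def Bc (N : ℕ) (p : ℝ) (k : ℕ) : ℝ :=
  if Even k then Real.sqrt (p * ((N : ℝ) - ((k / 2 : ℕ) : ℝ)))
  else Real.sqrt ((1 - p) * (((k / 2 : ℕ) : ℝ) + 1))

lemma alg_odd (a b G E F μ x P : ℝ) (ha : a ≠ 0) (hb : b ≠ 0) (hG : G ≠ 0)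
    (haa : a * a = P) (hx : x = μ ^ 2) :
    b * ((x * E - P * F) / (G * (a * b))) + a * (F / G) = μ * (μ * E / (G * a)) := by
  rw [← haa, hx]
  field_simp
  ring

lemma alg_int (a b c G E F μ q : ℝ) (ha : a ≠ 0) (hb : b ≠ 0) (hc : c ≠ 0) (hG : G ≠ 0)
    (hbb : b * b = q) :
    c * (μ * (F - q * E) / (G * (a * b) * c)) + b * (μ * E / (G * a))
      = μ * (F / (G * (a * b))) := by
  rw [← hbb]
  field_simp
  ring

lemma alg_bound (a b G E F μ q : ℝ) (ha : a ≠ 0) (hb : b ≠ 0) (hG : G ≠ 0)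
    (hbb : b * b = q) (hroot : μ * (F - q * E) = 0) :
    b * (μ * E / (G * a)) = μ * (F / (G * (a * b))) := by
  have h2 : μ * F = b * b * (μ * E) := by rw [hbb]; linear_combination hroot
  rw [(mul_div_assoc μ F _).symm, h2]
  field_simp

theorem construct {N : ℕ} (hN : 1 ≤ N) {p : ℝ} (hp0 : 0 < p) (hp1 : p < 1)
    (H : Matrix (Fin (2 * N + 1)) (Fin (2 * N + 1)) ℝ)
    (hH : ∀ i j : Fin (2 * N + 1), H i j =
      if (i : ℕ) + 1 = (j : ℕ) then
        (if Even (i : ℕ) then Real.sqrt (p * ((N : ℝ) - (((i : ℕ) / 2 : ℕ) : ℝ)))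
         else Real.sqrt ((1 - p) * ((((i : ℕ) / 2 : ℕ) : ℝ) + 1)))
      else if (j : ℕ) + 1 = (i : ℕ) then
        (if Even (j : ℕ) then Real.sqrt (p * ((N : ℝ) - (((j : ℕ) / 2 : ℕ) : ℝ)))
         else Real.sqrt ((1 - p) * ((((j : ℕ) / 2 : ℕ) : ℝ) + 1)))
      else 0)
    (μ : ℝ) (hroot : μ * Ek N p (μ ^ 2) N = 0) :
    ∃ v : Fin (2 * N + 1) → ℝ, v ≠ 0 ∧ H.mulVec v = μ • v := by
  set x := μ ^ 2 with hx
  set v : Fin (2 * N + 1) → ℝ := fun i =>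
    if Even (i : ℕ) then Fk N p x ((i : ℕ) / 2) / gsc N p ((i : ℕ) / 2)
    else μ * Ek N p x ((i : ℕ) / 2) / hsc N p ((i : ℕ) / 2) with hvdef
  have hvE : ∀ (k : ℕ) (hk : 2 * k < 2 * N + 1),
      v ⟨2 * k, hk⟩ = Fk N p x k / gsc N p k := by
    intro k hk
    have h2 : ((⟨2 * k, hk⟩ : Fin (2 * N + 1)) : ℕ) = 2 * k := rfl
    rw [hvdef]
    simp only [h2]
    rw [if_pos ⟨k, by omega⟩, show 2 * k / 2 = k by omega]
  have hvO : ∀ (k : ℕ) (hk : 2 * k + 1 < 2 * N + 1),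
      v ⟨2 * k + 1, hk⟩ = μ * Ek N p x k / hsc N p k := by
    intro k hk
    have h2 : ((⟨2 * k + 1, hk⟩ : Fin (2 * N + 1)) : ℕ) = 2 * k + 1 := rfl
    rw [hvdef]
    simp only [h2]
    rw [if_neg (by rw [Nat.even_iff]; omega), show (2 * k + 1) / 2 = k by omega]
  have hbE : ∀ k : ℕ, Bc N p (2 * k) = Real.sqrt (p * ((N : ℝ) - (k : ℝ))) := by
    intro k
    rw [Bc, if_pos ⟨k, by omega⟩, show 2 * k / 2 = k by omega]
  have hbO : ∀ k : ℕ, Bc N p (2 * k + 1) = Real.sqrt ((1 - p) * ((k : ℝ) + 1)) := by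
    intro k
    rw [Bc, if_neg (by rw [Nat.even_iff]; omega),
      show (2 * k + 1) / 2 = k by omega]
  have hv0 : v ⟨0, by omega⟩ = 1 := by
    have := hvE 0 (by omega)
    simp only [show 2 * 0 = 0 by omega] at this
    rw [this, Fk_zero]
    norm_num [gsc]
  refine ⟨v, ?_, ?_⟩
  · intro h
    rw [funext_iff] at h
    have := h ⟨0, by omega⟩
    rw [hv0] at this
    norm_num at this
  funext i
  have hsplit : H.mulVec v i =
      (∑ j : Fin (2 * N + 1), if (i : ℕ) + 1 = (j : ℕ) then Bc N p (i : ℕ) * v j else 0)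
      + (∑ j : Fin (2 * N + 1), if (j : ℕ) + 1 = (i : ℕ) then Bc N p (j : ℕ) * v j else 0) := by
    rw [Matrix.mulVec, ← Finset.sum_add_distrib]
    refine Finset.sum_congr rfl fun j _ => ?_
    show H i j * v j = _
    rw [hH i j]
    simp only [Bc]
    split_ifs <;> first | ring1 | (exfalso; omega)
  have hμsmul : (μ • v) i = μ * v i := rfl
  rw [hsplit, hμsmul, sum_if_single]
  -- second sum helper
  have hsum2 : ∀ (m : ℕ) (hm : m < 2 * N + 1), (i : ℕ) = m + 1 →
      (∑ j : Fin (2 * N + 1), if (j : ℕ) + 1 = (i : ℕ) then Bc N p (j : ℕ) * v j else 0)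
      = Bc N p m * v ⟨m, hm⟩ := by
    intro m hm him
    have : ∀ j : Fin (2 * N + 1), (if (j : ℕ) + 1 = (i : ℕ) then Bc N p (j : ℕ) * v j else 0)
        = (if m = (j : ℕ) then Bc N p (j : ℕ) * v j else 0) := by
      intro j
      refine if_congr ?_ rfl rfl
      omega
    rw [Finset.sum_congr rfl fun j _ => this j, sum_if_single (fun j => Bc N p (j : ℕ) * v j) m,
      dif_pos hm]
  rcases Nat.even_or_odd (i : ℕ) with he | ho
  · -- even site
    obtain ⟨n, hn⟩ := he
    have hn' : (i : ℕ) = 2 * n := by omega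
    have hnN : n ≤ N := by have := i.isLt; omega
    rcases Nat.eq_zero_or_pos n with rfl | hpos
    · -- site 0
      have hz : (∑ j : Fin (2 * N + 1), if (j : ℕ) + 1 = (i : ℕ) then Bc N p (j : ℕ) * v j else 0)
          = 0 := by
        apply Finset.sum_eq_zero
        intro j _
        rw [if_neg]
        omega
      rw [hz, add_zero, dif_pos (show (i : ℕ) + 1 < 2 * N + 1 by omega)]
      have hieq : (⟨(i : ℕ) + 1, by omega⟩ : Fin (2 * N + 1)) = ⟨2 * 0 + 1, by omega⟩ :=
        Fin.ext (by simp only [Fin.val_mk]; omega)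
      have hvi : v i = 1 := by
        have hieq0 : i = ⟨2 * 0, by omega⟩ := Fin.ext (by simp [hn'])
        rw [hieq0, hvE 0 (by omega), Fk_zero]
        norm_num [gsc]
      rw [hieq, hvO 0 (by omega), hvi, Ek_zero, hn', show 2 * 0 = 2 * 0 from rfl]
      rw [show Bc N p (2 * 0) = Real.sqrt (p * ((N : ℝ) - (0 : ℕ))) from hbE 0]
      have ha : 0 < Real.sqrt (p * ((N : ℝ) - ((0 : ℕ) : ℝ))) :=
        sqrtp_pos hp0 (show 0 < N by omega)
      rw [hsc, gsc]
      rw [mul_one]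
      field_simp
  -- remaining cases
    · -- site 2n with n ≥ 1
      obtain ⟨m, rfl⟩ : ∃ m, n = m + 1 := ⟨n - 1, by omega⟩
      have hmN : m + 1 ≤ N := hnN
      have hs2 := hsum2 (2 * m + 1) (by omega) (by omega)
      rw [hs2]
      have hmk : (⟨2 * m + 1, by omega⟩ : Fin (2 * N + 1)) = ⟨2 * m + 1, by omega⟩ := rfl
      rw [hvO m (by omega), hbO m]
      have hvi : v i = Fk N p x (m + 1) / gsc N p (m + 1) := by
        have hieq0 : i = ⟨2 * (m + 1), by omega⟩ := Fin.ext (by simp [hn'])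
        rw [hieq0, hvE (m + 1) (by omega)]
      rw [hvi]
      -- abbreviations
      have haP : (0:ℝ) < p * ((N : ℝ) - (m : ℝ)) := by
        have : (m : ℝ) < (N : ℝ) := by exact_mod_cast (show m < N by omega)
        nlinarith
      have hbP : (0:ℝ) < (1 - p) * ((m : ℝ) + 1) := by
        have : (0:ℝ) ≤ (m : ℝ) := Nat.cast_nonneg m
        nlinarith
      have ha : 0 < Real.sqrt (p * ((N : ℝ) - (m : ℝ))) := Real.sqrt_pos.2 haP
      have hb : 0 < Real.sqrt ((1 - p) * ((m : ℝ) + 1)) := Real.sqrt_pos.2 hbP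
      have hG : 0 < gsc N p m := gsc_pos hp0 hp1 m (by omega)
      have hbb : Real.sqrt ((1 - p) * ((m : ℝ) + 1)) * Real.sqrt ((1 - p) * ((m : ℝ) + 1))
          = (1 - p) * ((m : ℝ) + 1) := Real.mul_self_sqrt (le_of_lt hbP)
      have hgs : gsc N p (m + 1) = gsc N p m * (Real.sqrt (p * ((N : ℝ) - (m : ℝ)))
          * Real.sqrt ((1 - p) * ((m : ℝ) + 1))) := rfl
      have hhs : hsc N p m = gsc N p m * Real.sqrt (p * ((N : ℝ) - (m : ℝ))) := rfl
      rcases eq_or_lt_of_le hmN with hEnd | hInt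
      · -- boundary: m + 1 = N
        rw [dif_neg (by omega)]
        have hroot' : μ * Ek N p x (m + 1) = 0 := by rw [hEnd]; exact hroot
        rw [Ek_succ] at hroot'
        rw [hgs, hhs, zero_add]
        exact alg_bound _ _ _ _ _ _ _ (ne_of_gt ha) (ne_of_gt hb) (ne_of_gt hG) hbb hroot'
      · -- interior: m + 1 < N
        rw [dif_pos (show (i : ℕ) + 1 < 2 * N + 1 by omega)]
        have hieq : (⟨(i : ℕ) + 1, by omega⟩ : Fin (2 * N + 1)) = ⟨2 * (m + 1) + 1, by omega⟩ :=
          Fin.ext (by simp only [Fin.val_mk]; omega)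
        have hbc : Bc N p (i : ℕ) = Real.sqrt (p * ((N : ℝ) - ((m + 1 : ℕ) : ℝ))) := by
          rw [hn', show 2 * (m + 1) = 2 * (m + 1) from rfl]
          exact hbE (m + 1)
        rw [hieq, hvO (m + 1) (by omega), hbc]
        have haP' : (0:ℝ) < p * ((N : ℝ) - ((m + 1 : ℕ) : ℝ)) := by
          have : ((m + 1 : ℕ) : ℝ) < (N : ℝ) := by exact_mod_cast hInt
          nlinarith
        have ha' : 0 < Real.sqrt (p * ((N : ℝ) - ((m + 1 : ℕ) : ℝ))) := Real.sqrt_pos.2 haP'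
        have hhs' : hsc N p (m + 1)
            = gsc N p (m + 1) * Real.sqrt (p * ((N : ℝ) - ((m + 1 : ℕ) : ℝ))) := rfl
        rw [hhs', hgs, hhs]
        rw [Ek_succ N p x m]
        exact alg_int _ _ _ _ _ _ _ _ (ne_of_gt ha) (ne_of_gt hb) (ne_of_gt ha') (ne_of_gt hG)
          hbb
  · -- odd site
    obtain ⟨n, hn⟩ := ho
    have hnN : n < N := by have := i.isLt; omega
    have hs2 := hsum2 (2 * n) (by omega) (by omega)
    rw [hs2, dif_pos (show (i : ℕ) + 1 < 2 * N + 1 by omega)]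
    have hieq : (⟨(i : ℕ) + 1, by omega⟩ : Fin (2 * N + 1)) = ⟨2 * (n + 1), by omega⟩ :=
      Fin.ext (by simp only [Fin.val_mk]; omega)
    have hbc : Bc N p (i : ℕ) = Real.sqrt ((1 - p) * ((n : ℝ) + 1)) := by
      rw [hn]; exact hbO n
    have hvi : v i = μ * Ek N p x n / hsc N p n := by
      have hieq0 : i = ⟨2 * n + 1, by omega⟩ := Fin.ext (by simp [hn])
      rw [hieq0, hvO n (by omega)]
    rw [hieq, hvE (n + 1) (by omega), hbc, hvi, hbE n]
    have haP : (0:ℝ) < p * ((N : ℝ) - (n : ℝ)) := by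
      have : (n : ℝ) < (N : ℝ) := by exact_mod_cast hnN
      nlinarith
    have hbP : (0:ℝ) < (1 - p) * ((n : ℝ) + 1) := by
      have : (0:ℝ) ≤ (n : ℝ) := Nat.cast_nonneg n
      nlinarith
    have ha : 0 < Real.sqrt (p * ((N : ℝ) - (n : ℝ))) := Real.sqrt_pos.2 haP
    have hb : 0 < Real.sqrt ((1 - p) * ((n : ℝ) + 1)) := Real.sqrt_pos.2 hbP
    have hG : 0 < gsc N p n := gsc_pos hp0 hp1 n (by omega)
    have haa : Real.sqrt (p * ((N : ℝ) - (n : ℝ))) * Real.sqrt (p * ((N : ℝ) - (n : ℝ)))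
        = p * ((N : ℝ) - (n : ℝ)) := Real.mul_self_sqrt (le_of_lt haP)
    have hgs : gsc N p (n + 1) = gsc N p n * (Real.sqrt (p * ((N : ℝ) - (n : ℝ)))
        * Real.sqrt ((1 - p) * ((n : ℝ) + 1))) := rfl
    have hhs : hsc N p n = gsc N p n * Real.sqrt (p * ((N : ℝ) - (n : ℝ))) := rfl
    rw [hgs, hhs, Fk_succ N p x n, hvE n (by omega)]
    exact alg_odd _ _ _ _ _ _ _ _ (ne_of_gt ha) (ne_of_gt hb) (ne_of_gt hG) haa hx

lemma nu_inj {N : ℕ} {μ : ℝ} (hμ0 : μ ≠ 0)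
    (hμk : ∀ k : ℕ, k < N → μ ≠ Real.sqrt ((k : ℝ) + 1) ∧ μ ≠ -Real.sqrt ((k : ℝ) + 1)) :
    Function.Injective (Sum.elim ![μ, 0]
      (fun bk : Bool × Fin N => (if bk.1 then 1 else -1) * Real.sqrt (((bk.2 : ℕ) : ℝ) + 1))) := by
  have hsqpos : ∀ k : ℕ, 0 < Real.sqrt ((k : ℝ) + 1) := fun k =>
    Real.sqrt_pos.2 (by positivity)
  have hne : ∀ (b : Bool) (k : Fin N),
      μ ≠ (if b then (1:ℝ) else -1) * Real.sqrt (((k : ℕ) : ℝ) + 1) := by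
    intro b k
    rcases b
    · simpa using (hμk (k : ℕ) k.isLt).2
    · simpa using (hμk (k : ℕ) k.isLt).1
  have hne0 : ∀ (b : Bool) (k : Fin N),
      (0 : ℝ) ≠ (if b then (1:ℝ) else -1) * Real.sqrt (((k : ℕ) : ℝ) + 1) := by
    intro b k
    have := hsqpos (k : ℕ)
    rcases b
    · simp; linarith
    · simp; linarith
  rintro (t1 | ⟨b1, k1⟩) (t2 | ⟨b2, k2⟩) heq
  · fin_cases t1 <;> fin_cases t2
    · rfl
    · exact absurd (by simpa using heq : μ = 0) hμ0
    · exact absurd (by simpa using heq.symm : μ = 0) hμ0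
    · rfl
  · exfalso
    fin_cases t1
    · exact hne b2 k2 (by simpa using heq)
    · exact hne0 b2 k2 (by simpa using heq)
  · exfalso
    fin_cases t2
    · exact hne b1 k1 (by simpa using heq.symm)
    · exact hne0 b1 k1 (by simpa using heq.symm)
  · have heq' : (if b1 then (1:ℝ) else -1) * Real.sqrt (((k1 : ℕ) : ℝ) + 1)
        = (if b2 then (1:ℝ) else -1) * Real.sqrt (((k2 : ℕ) : ℝ) + 1) := by simpa using heq
    have h1 := hsqpos (k1 : ℕ)
    have h2 := hsqpos (k2 : ℕ)
    have hk : ∀ (hs : Real.sqrt (((k1 : ℕ) : ℝ) + 1) = Real.sqrt (((k2 : ℕ) : ℝ) + 1)),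
        (Sum.inr (b1, k1) : Fin 2 ⊕ Bool × Fin N) = Sum.inr (b1, k2) := by
      intro hs
      have h3 := (Real.sqrt_inj (by positivity) (by positivity)).1 hs
      have h4 : (k1 : ℕ) = (k2 : ℕ) := by exact_mod_cast (by linarith : ((k1 : ℕ) : ℝ) = ((k2 : ℕ) : ℝ))
      rw [show k1 = k2 from Fin.ext h4]
    rcases b1 <;> rcases b2 <;> simp only [Bool.false_eq_true, if_false, if_true] at heq'
    · exact hk (by linarith)
    · exfalso; linarith
    · exfalso; linarith
    · exact hk (by linarith)

end

end KSSH

open KSSH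

/-- Inhomogeneous SSH model associated to Krawtchouk polynomials: the `(2N+1)×(2N+1)`
symmetric tridiagonal matrix with zero diagonal and couplings `t_n^+ = √(p(N−n))`
between sites `2n` and `2n+1`, and `t_n^− = √((1−p)(n+1))` between sites `2n+1` and
`2n+2`, has eigenvalues exactly `0` and `±√(k+1)` for `k = 0,…,N−1`. -/
theorem krawtchouk_ssh_spectrum (N : ℕ) (hN : 1 ≤ N) (p : ℝ) (hp0 : 0 < p) (hp1 : p < 1)
    (H : Matrix (Fin (2 * N + 1)) (Fin (2 * N + 1)) ℝ)
    (hH : ∀ i j : Fin (2 * N + 1), H i j =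
      if (i : ℕ) + 1 = (j : ℕ) then
        (if Even (i : ℕ) then Real.sqrt (p * ((N : ℝ) - (((i : ℕ) / 2 : ℕ) : ℝ)))
         else Real.sqrt ((1 - p) * ((((i : ℕ) / 2 : ℕ) : ℝ) + 1)))
      else if (j : ℕ) + 1 = (i : ℕ) then
        (if Even (j : ℕ) then Real.sqrt (p * ((N : ℝ) - (((j : ℕ) / 2 : ℕ) : ℝ)))
         else Real.sqrt ((1 - p) * ((((j : ℕ) / 2 : ℕ) : ℝ) + 1)))
      else 0) :
    ∀ μ : ℝ, (∃ v : Fin (2 * N + 1) → ℝ, v ≠ 0 ∧ H.mulVec v = μ • v) ↔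
      (μ = 0 ∨ ∃ k : ℕ, k < N ∧
        (μ = Real.sqrt ((k : ℝ) + 1) ∨ μ = -Real.sqrt ((k : ℝ) + 1))) := by
  have hrootk : ∀ k : ℕ, k < N → ∀ s : ℝ, s ^ 2 = (k : ℝ) + 1 →
      s * Ek N p (s ^ 2) N = 0 := by
    intro k hk s hs
    have h1 : ((k + 1 : ℕ) : ℝ) = (k : ℝ) + 1 := by push_cast; ring
    have h0 : Ek N p ((k : ℝ) + 1) N = 0 := by
      rw [← h1]
      exact Ek_nat_zero N p (k + 1) (by omega) (by omega)
    rw [hs, h0, mul_zero]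
  have hsqs : ∀ k : ℕ, (Real.sqrt ((k : ℝ) + 1)) ^ 2 = (k : ℝ) + 1 := fun k =>
    Real.sq_sqrt (by positivity)
  have hsqpos : ∀ k : ℕ, 0 < Real.sqrt ((k : ℝ) + 1) := fun k =>
    Real.sqrt_pos.2 (by positivity)
  intro μ
  constructor
  · rintro ⟨v, hv0, hv⟩
    by_contra hmem
    push_neg at hmem
    obtain ⟨hμ0, hμk⟩ := hmem
    have hvecs : ∀ idx : Fin 2 ⊕ Bool × Fin N, ∃ w : Fin (2 * N + 1) → ℝ, w ≠ 0 ∧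
        H.mulVec w = (Sum.elim ![μ, 0]
          (fun bk : Bool × Fin N =>
            (if bk.1 then (1:ℝ) else -1) * Real.sqrt (((bk.2 : ℕ) : ℝ) + 1)) idx) • w := by
      rintro (⟨(_ | _ | tv), ht⟩ | ⟨b, k⟩)
      · exact ⟨v, hv0, hv⟩
      · exact construct hN hp0 hp1 H hH 0 (by rw [zero_mul])
      · omega
      · have hsq : ((if b then (1:ℝ) else -1) * Real.sqrt (((k : ℕ) : ℝ) + 1)) ^ 2
            = ((k : ℕ) : ℝ) + 1 := by
          rcases b <;> simp [mul_pow, hsqs (k : ℕ)]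
        exact construct hN hp0 hp1 H hH _ (hrootk (k : ℕ) k.isLt _ hsq)
    choose w hw0 hwEq using hvecs
    have heig : ∀ idx, Module.End.HasEigenvector (R := ℝ) (M := Fin (2 * N + 1) → ℝ)
        (Matrix.mulVecLin H)
        ((Sum.elim ![μ, 0]
          (fun bk : Bool × Fin N =>
            (if bk.1 then (1:ℝ) else -1) * Real.sqrt (((bk.2 : ℕ) : ℝ) + 1))) idx) (w idx) := by
      intro idx
      refine ⟨Module.End.mem_eigenspace_iff.2 ?_, hw0 idx⟩
      rw [Matrix.mulVecLin_apply]
      exact hwEq idx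
    have hli := Module.End.eigenvectors_linearIndependent'
      (Matrix.mulVecLin H : Module.End ℝ (Fin (2 * N + 1) → ℝ)) _ (nu_inj hμ0 hμk) w heig
    have hcard := hli.fintype_card_le_finrank
    rw [Module.finrank_fin_fun] at hcard
    simp only [Fintype.card_sum, Fintype.card_prod, Fintype.card_bool, Fintype.card_fin] at hcard
    omega
  · rintro (rfl | ⟨k, hk, (rfl | rfl)⟩)
    · exact construct hN hp0 hp1 H hH 0 (by rw [zero_mul])
    · exact construct hN hp0 hp1 H hH _ (hrootk k hk _ (hsqs k))
    · exact construct hN hp0 hp1 H hH _ (hrootk k hk _ (by rw [neg_pow]; simp [hsqs k]))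
end

section
/- Let N ≥ 1 and −1 < δ < 1, and let H be the (2N+1)×(2N+1) SSH matrix (zero diagonal, off-diagonals alternating t⁺ = (1+δ)/2, t⁻ = (1−δ)/2 starting with t⁺). Then the kernel of H is one-dimensional: the vector v defined by v_{2n+1} = 0 for 0 ≤ n ≤ N−1 and v_{2n} = (−t⁺/t⁻)^n for 0 ≤ n ≤ N satisfies H v = 0, and every vector in the kernel of H is a scalar multiple of v. -/
private lemma ssh_sum_ite_coe {m : ℕ} (c : ℕ) (f : Fin m → ℝ) :
    (∑ j : Fin m, if (j : ℕ) = c then f j else 0)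
      = if h : c < m then f ⟨c, h⟩ else 0 := by
  split_ifs with h
  · rw [Finset.sum_eq_single (⟨c, h⟩ : Fin m)]
    · simp
    · intro j _ hj
      exact if_neg fun hc => hj (Fin.ext hc)
    · intro hmem; exact absurd (Finset.mem_univ _) hmem
  · exact Finset.sum_eq_zero fun j _ => if_neg fun hc => h (lt_of_le_of_lt hc.ge j.2)

/-- The kernel of the SSH single-particle Hamiltonian on `2N+1` sites is one-dimensional:
the vector `v` with `v_{2n} = (−t⁺/t⁻)^n` and `v_{2n+1} = 0` satisfies `H v = 0`, and any
kernel vector is a scalar multiple of `v`. -/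
theorem ssh_kernel (N : ℕ) (hN : 1 ≤ N) (δ : ℝ) (hδ1 : -1 < δ) (hδ2 : δ < 1)
    (H : Matrix (Fin (2 * N + 1)) (Fin (2 * N + 1)) ℝ)
    (hH : ∀ i j : Fin (2 * N + 1), H i j =
      if (i : ℕ) + 1 = (j : ℕ) then (if Even (i : ℕ) then (1 + δ) / 2 else (1 - δ) / 2)
      else if (j : ℕ) + 1 = (i : ℕ) then (if Even (j : ℕ) then (1 + δ) / 2 else (1 - δ) / 2)
      else 0)
    (v : Fin (2 * N + 1) → ℝ)
    (hv : ∀ i : Fin (2 * N + 1),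
      v i = if Even (i : ℕ) then (-(((1 + δ) / 2) / ((1 - δ) / 2))) ^ ((i : ℕ) / 2) else 0) :
    H.mulVec v = 0 ∧ ∀ w : Fin (2 * N + 1) → ℝ, H.mulVec w = 0 → ∃ c : ℝ, w = c • v := by
  set p : ℝ := (1 + δ) / 2 with hpdef
  set q : ℝ := (1 - δ) / 2 with hqdef
  have hp : p ≠ 0 := by rw [hpdef]; intro h; nlinarith [h]
  have hq : q ≠ 0 := by rw [hqdef]; intro h; nlinarith [h]
  set r : ℝ := -(p / q) with hrdef
  -- key formula for mulVec
  have key : ∀ (u : Fin (2 * N + 1) → ℝ) (i : Fin (2 * N + 1)), H.mulVec u i =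
      (if h : (i : ℕ) + 1 < 2 * N + 1 then
        (if Even (i : ℕ) then p else q) * u ⟨(i : ℕ) + 1, h⟩ else 0)
      + (if h : 0 < (i : ℕ) then
        (if Even ((i : ℕ) - 1) then p else q) * u ⟨(i : ℕ) - 1, by omega⟩ else 0) := by
    intro u i
    have hterm : ∀ j : Fin (2 * N + 1), H i j * u j =
        (if (j : ℕ) = (i : ℕ) + 1 then (if Even (i : ℕ) then p else q) * u j else 0)
        + (if 0 < (i : ℕ) then
            (if (j : ℕ) = (i : ℕ) - 1 then (if Even ((i : ℕ) - 1) then p else q) * u j else 0)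
          else 0) := by
      intro j
      rw [hH]
      rcases Nat.eq_zero_or_pos (i : ℕ) with h0 | h0
      · simp only [h0, if_neg (by omega : ¬ (0:ℕ) < 0)]
        split_ifs with h1 h2 h3 <;> simp_all <;> omega
      · obtain ⟨k, hk⟩ : ∃ k, (i : ℕ) = k + 1 := ⟨(i : ℕ) - 1, by omega⟩
        rw [hk]
        simp only [Nat.add_sub_cancel, if_pos (Nat.succ_pos k)]
        rcases eq_or_ne (j : ℕ) k with hjk | hjk
        · rw [hjk]
          split_ifs with h1 h2 h3 h4 h5 h6 h7 <;> try ring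
          all_goals (exfalso; omega)
        · split_ifs with h1 h2 h3 h4 h5 h6 h7 <;> try ring
          all_goals (exfalso; omega)
    unfold Matrix.mulVec dotProduct
    rw [Finset.sum_congr rfl (fun j _ => hterm j), Finset.sum_add_distrib,
      ssh_sum_ite_coe]
    congr 1
    rcases Nat.eq_zero_or_pos (i : ℕ) with h0 | h0
    · rw [dif_neg (by omega), Finset.sum_eq_zero]
      intro j _; rw [if_neg (by omega)]
    · rw [dif_pos h0]
      rw [Finset.sum_congr rfl (fun j _ => if_pos h0), ssh_sum_ite_coe,
        dif_pos (by omega : (i : ℕ) - 1 < 2 * N + 1)]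
  -- v values
  have hveven : ∀ (n : ℕ) (h : 2 * n < 2 * N + 1), v ⟨2 * n, h⟩ = r ^ n := by
    intro n h
    rw [hv]
    simp only [if_pos (even_two_mul n)]
    congr 1
    omega
  have hvodd : ∀ (n : ℕ) (h : 2 * n + 1 < 2 * N + 1), v ⟨2 * n + 1, h⟩ = 0 := by
    intro n h
    rw [hv, if_neg (by simp [Nat.even_add_one, Nat.even_mul])]
  have hvodd' : ∀ (m : ℕ) (hm : m < 2 * N + 1), ¬ Even m → v ⟨m, hm⟩ = 0 := by
    intro m hm hme
    rw [hv]; exact if_neg hme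
  have hqr : q * r = -p := by
    rw [hrdef, mul_neg, mul_div_assoc', mul_comm q p, mul_div_assoc, div_self hq, mul_one]
  -- Part 1
  have part1 : H.mulVec v = 0 := by
    funext i
    rw [key]
    rcases Nat.even_or_odd (i : ℕ) with ⟨n, hn⟩ | ⟨n, hn⟩
    · have hn' : (i : ℕ) = 2 * n := by omega
      simp only [Pi.zero_apply]
      have hA : (if h : (i : ℕ) + 1 < 2 * N + 1 then
          (if Even (i : ℕ) then p else q) * v ⟨(i : ℕ) + 1, h⟩ else 0) = 0 := by
        by_cases h : (i : ℕ) + 1 < 2 * N + 1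
        · rw [dif_pos h, hvodd' _ h (by rintro ⟨t, ht⟩; omega), mul_zero]
        · rw [dif_neg h]
      have hB : (if h : 0 < (i : ℕ) then
          (if Even ((i : ℕ) - 1) then p else q) * v ⟨(i : ℕ) - 1, by omega⟩ else 0) = 0 := by
        by_cases h : 0 < (i : ℕ)
        · rw [dif_pos h, hvodd' _ (by omega) (by rintro ⟨t, ht⟩; omega), mul_zero]
        · rw [dif_neg h]
      rw [hA, hB, add_zero]
    · have hn' : (i : ℕ) = 2 * n + 1 := by omega
      have h1 : (i : ℕ) + 1 < 2 * N + 1 := by omega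
      have h2 : 0 < (i : ℕ) := by omega
      rw [dif_pos h1, dif_pos h2,
        if_neg (by rw [hn']; simp [Nat.even_add_one, Nat.even_mul]),
        if_pos (by rw [show (i:ℕ)-1 = 2*n from by omega]; exact even_two_mul n),
        show (⟨(i:ℕ)+1, h1⟩ : Fin (2*N+1)) = ⟨2*(n+1), by omega⟩ from Fin.mk_eq_mk.mpr (by omega),
        show (⟨(i:ℕ)-1, by omega⟩ : Fin (2*N+1)) = ⟨2*n, by omega⟩ from Fin.mk_eq_mk.mpr (by omega),
        hveven (n+1) (by omega), hveven n (by omega), Pi.zero_apply]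
      have : q * r ^ (n + 1) = (q * r) * r ^ n := by ring
      rw [this, hqr]; ring
  refine ⟨part1, ?_⟩
  -- Part 2
  intro w hw
  have key' : ∀ (k : ℕ) (hk : k < 2 * N + 1),
      (if h : k + 1 < 2 * N + 1 then (if Even k then p else q) * w ⟨k + 1, h⟩ else 0)
      + (if h : 0 < k then
          (if Even (k - 1) then p else q) * w ⟨k - 1, by omega⟩ else 0) = 0 := by
    intro k hk
    have h0 := congrFun hw ⟨k, hk⟩
    rw [key w ⟨k, hk⟩] at h0
    exact h0
  have hwe0 : p * w ⟨1, by omega⟩ = 0 := by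
    have h0 := key' 0 (by omega)
    rw [dif_pos (show (0:ℕ) + 1 < 2 * N + 1 by omega),
      dif_neg (show ¬ 0 < (0:ℕ) by omega), if_pos Even.zero, add_zero] at h0
    exact h0
  have hwe2 : ∀ (k : ℕ) (hk : k + 1 < 2 * N + 1),
      (if h : k + 2 < 2 * N + 1 then (if Even (k + 1) then p else q) * w ⟨k + 2, h⟩ else 0)
      + (if Even k then p else q) * w ⟨k, by omega⟩ = 0 := by
    intro k hk
    have h0 := key' (k + 1) hk
    rw [dif_pos (show 0 < k + 1 by omega)] at h0
    simp only [Nat.add_sub_cancel] at h0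
    convert h0 using 3 <;> omega
  -- odd entries vanish
  have hodd : ∀ (n : ℕ) (h : 2 * n + 1 < 2 * N + 1), w ⟨2 * n + 1, h⟩ = 0 := by
    intro n
    induction n with
    | zero =>
      intro h
      have h1 : w ⟨1, by omega⟩ = 0 := by
        rcases mul_eq_zero.mp hwe0 with h' | h'
        · exact absurd h' hp
        · exact h'
      rw [show (⟨2*0+1, h⟩ : Fin (2*N+1)) = ⟨1, by omega⟩ from Fin.mk_eq_mk.mpr (by omega)]
      exact h1
    | succ m ih =>
      intro h
      have h0 := hwe2 (2 * m + 1) (by omega)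
      rw [dif_pos (show 2*m+1+2 < 2*N+1 by omega),
        if_pos (show Even (2*m+1+1) from ⟨m+1, by ring⟩),
        if_neg (show ¬ Even (2*m+1) from by rintro ⟨t, ht⟩; omega),
        ih (by omega), mul_zero, add_zero] at h0
      rcases mul_eq_zero.mp h0 with h' | h'
      · exact absurd h' hp
      · rw [show (⟨2*(m+1)+1, h⟩ : Fin (2*N+1)) = ⟨2*m+1+2, by omega⟩
            from Fin.mk_eq_mk.mpr (by omega)]
        exact h'
  -- even entries geometric
  have heven : ∀ (n : ℕ) (h : 2 * n < 2 * N + 1),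
      w ⟨2 * n, h⟩ = w ⟨0, by omega⟩ * r ^ n := by
    intro n
    induction n with
    | zero =>
      intro h
      rw [show (⟨2*0, h⟩ : Fin (2*N+1)) = ⟨0, by omega⟩ from Fin.mk_eq_mk.mpr (by omega)]
      simp
    | succ m ih =>
      intro h
      have h0 := hwe2 (2 * m) (by omega)
      rw [dif_pos (show 2*m+2 < 2*N+1 by omega),
        if_neg (show ¬ Even (2*m+1) from by rintro ⟨t, ht⟩; omega),
        if_pos (show Even (2*m) from ⟨m, by ring⟩),
        ih (by omega)] at h0
      have hnext : w ⟨2*m+2, by omega⟩ = w ⟨0, by omega⟩ * r ^ (m+1) := by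
        have hq' : q ≠ 0 := hq
        apply mul_left_cancel₀ hq'
        linear_combination h0 - (w ⟨0, by omega⟩ * r ^ m) * hqr
      rw [show (⟨2*(m+1), h⟩ : Fin (2*N+1)) = ⟨2*m+2, by omega⟩
          from Fin.mk_eq_mk.mpr (by omega)]
      exact hnext
  refine ⟨w ⟨0, by omega⟩, ?_⟩
  funext i
  rcases Nat.even_or_odd (i : ℕ) with ⟨n, hn⟩ | ⟨n, hn⟩
  · have hn' : (i : ℕ) = 2 * n := by omega
    have hi : i = ⟨2 * n, by omega⟩ := Fin.ext hn'
    rw [hi, heven n (by omega), Pi.smul_apply, hveven n (by omega), smul_eq_mul]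
  · have hn' : (i : ℕ) = 2 * n + 1 := by omega
    have hi : i = ⟨2 * n + 1, by omega⟩ := Fin.ext hn'
    rw [hi, hodd n (by omega), Pi.smul_apply, hvodd n (by omega), smul_eq_mul, mul_zero]
end
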